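/- arXiv:1310.7240 — 6 statements merged into one kernel-verified Lean document; each statement's English description precedes it below -/
import Mathlib

section
/- Let n = (n_1,…,n_p) be a composition and for l ∈ ℤ_{≥0} let k(l), a(l), r(l) denote its block index, type and offset with respect to n. Fix a ∈ {1,…,p} and l ∈ ℤ_{≥0}, and let c = #{i : 0 ≤ i ≤ l, a(i) = a}. Then the map i ↦ k(i)·n_a + r(i) restricted to {i : 0 ≤ i ≤ l, a(i) = a} is a strictly increasing bijection onto {0, 1, …, c − 1}. -/
/-!
A type-`a` position is `i = k|n| + (n_1 + ⋯ + n_{a-1}) + r` with `r < n_a`, and its exponent is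
`k n_a + r`. Both numbers encode the pair `(k, r)` lexicographically, so `i ↦ k n_a + r` is an
order isomorphism from the type-`a` positions onto `ℕ` (surjective because every `m` is
`(m / n_a) n_a + m % n_a`). Hence the exponent of a type-`a` position is the number of type-`a`
positions before it, i.e. `Nat.count`, and counting maps the type-`a` positions `≤ l` bijectively
onto an initial segment.
-/

open Finset

lemma Nat.mul_add_lt_mul_add_of_lt {d k k' r r' : ℕ} (hr : r < d) (hk : k < k') :
    k * d + r < k' * d + r' :=
  calc k * d + r < (k + 1) * d := by rw [Nat.succ_mul]; omega
    _ ≤ k' * d := Nat.mul_le_mul_right d hk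
    _ ≤ k' * d + r' := Nat.le_add_right _ _

lemma Nat.mul_add_lt_mul_add_iff {d k k' r r' : ℕ} (hr : r < d) (hr' : r' < d) :
    k * d + r < k' * d + r' ↔ k < k' ∨ k = k' ∧ r < r' := by
  rcases lt_trichotomy k k' with h | rfl | h
  · simp [h, Nat.mul_add_lt_mul_add_of_lt hr h]
  · simp
  · have := Nat.mul_add_lt_mul_add_of_lt (r' := r) hr' h
    simp only [h.not_gt, false_or, h.ne', false_and, iff_false, not_lt]
    exact this.le

lemma Nat.mul_add_eq_mul_add_iff {d k k' r r' : ℕ} (hr : r < d) (hr' : r' < d) :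
    k * d + r = k' * d + r' ↔ k = k' ∧ r = r' := by
  refine ⟨fun h => ?_, fun ⟨hk, hr⟩ => hk ▸ hr ▸ rfl⟩
  have hlt := (Nat.mul_add_lt_mul_add_iff hr hr').not.mp h.not_lt
  have hgt := (Nat.mul_add_lt_mul_add_iff hr' hr).not.mp h.not_gt
  omega

lemma Nat.count_eq_of_strictMonoOn_of_surjOn {p : ℕ → Prop} [DecidablePred p] {f : ℕ → ℕ}
    (hmono : StrictMonoOn f (Set.ofPred p)) (hsurj : Set.SurjOn f (Set.ofPred p) Set.univ) {i : ℕ}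
    (hi : p i) : count p i = f i := by
  have himage : {j ∈ range i | p j}.image f = range (f i) := by
    ext m
    simp only [mem_image, mem_filter, mem_range]
    constructor
    · rintro ⟨j, ⟨hji, hj⟩, rfl⟩
      exact hmono hj hi hji
    · intro hm
      obtain ⟨j, hj, rfl⟩ := hsurj (Set.mem_univ m)
      exact ⟨j, ⟨(hmono.lt_iff_lt hj hi).mp hm, hj⟩, rfl⟩
  have hinj : Set.InjOn f ↑{j ∈ range i | p j} :=
    hmono.injOn.mono fun j hj => (mem_filter.mp hj).2
  rw [count_eq_card_filter_range, ← card_range (f i), ← himage, Finset.card_image_of_injOn hinj]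

lemma Nat.bijOn_count_filter_range (p : ℕ → Prop) [DecidablePred p] (n : ℕ) :
    Set.BijOn (count p) ↑{x ∈ range n | p x} ↑(range (count p n)) := by
  refine ⟨fun x hx => ?_, fun x hx y hy hxy => ?_, fun m hm => ?_⟩
  · simp only [coe_filter, mem_range, Set.mem_ofPred_eq, coe_range, Set.mem_Iio] at hx ⊢
    exact count_strict_mono hx.2 hx.1
  · exact count_injective (mem_filter.mp hx).2 (mem_filter.mp hy).2 hxy
  · simp only [coe_range, Set.mem_Iio] at hm
    have hcard : ∀ hf : (Set.ofPred p).Finite, m < #hf.toFinset :=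
      fun hf => hm.trans_le (count_le_card hf n)
    exact ⟨nth p m, by simpa using ⟨nth_lt_of_lt_count hm, nth_mem m hcard⟩, count_nth hcard⟩

def blockStart {p : ℕ} (n : Fin p → ℕ) (b : Fin p) : ℕ :=
  ∑ i ∈ univ.filter (fun i => i < b), n i

def IsBlockDecomposition {p : ℕ} (n : Fin p → ℕ) (kk : ℕ → ℕ) (aa : ℕ → Fin p) (rr : ℕ → ℕ) :
    Prop :=
  ∀ l, rr l < n (aa l) ∧ l = kk l * (∑ b, n b) + blockStart n (aa l) + rr l

section

variable {p : ℕ} {n : Fin p → ℕ}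

lemma blockStart_add_eq_sum_Iic (b : Fin p) : blockStart n b + n b = ∑ i ∈ Iic b, n i := by
  rw [blockStart, filter_gt_eq_Iio, ← Iio_insert, sum_insert (by simp), add_comm]

lemma blockStart_add_lt_sum {b : Fin p} {r : ℕ} (hr : r < n b) : blockStart n b + r < ∑ b, n b :=
  calc blockStart n b + r < blockStart n b + n b := by omega
    _ = ∑ i ∈ Iic b, n i := blockStart_add_eq_sum_Iic b
    _ ≤ ∑ b, n b := sum_le_sum_of_subset (subset_univ _)

lemma blockStart_add_le_of_lt {b b' : Fin p} (h : b < b') :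
    blockStart n b + n b ≤ blockStart n b' := by
  rw [blockStart_add_eq_sum_Iic, blockStart, filter_gt_eq_Iio]
  exact sum_le_sum_of_subset fun i hi => mem_Iio.mpr ((mem_Iic.mp hi).trans_lt h)

lemma blockStart_add_injective {b b' : Fin p} {r r' : ℕ} (hr : r < n b) (hr' : r' < n b')
    (h : blockStart n b + r = blockStart n b' + r') : b = b' ∧ r = r' := by
  have hb : b = b' := by
    rcases lt_trichotomy b b' with hlt | heq | hgt
    · have := blockStart_add_le_of_lt (n := n) hlt; omega
    · exact heq
    · have := blockStart_add_le_of_lt (n := n) hgt; omega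
  subst hb
  exact ⟨rfl, by omega⟩

end

namespace IsBlockDecomposition

variable {p : ℕ} {n : Fin p → ℕ} {kk : ℕ → ℕ} {aa : ℕ → Fin p} {rr : ℕ → ℕ}

lemma eq_of_eq_mul_add (hdec : IsBlockDecomposition n kk aa rr) {l k r : ℕ} {b : Fin p}
    (hr : r < n b) (hl : l = k * (∑ b, n b) + blockStart n b + r) :
    kk l = k ∧ aa l = b ∧ rr l = r := by
  obtain ⟨hrl, hll⟩ := hdec l
  have hsum := hll.symm.trans hl
  rw [add_assoc, add_assoc, Nat.mul_add_eq_mul_add_iff] at hsum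
  · obtain ⟨hk, hs⟩ := hsum
    obtain ⟨hb, hr⟩ := blockStart_add_injective hrl hr hs
    exact ⟨hk, hb, hr⟩
  · exact blockStart_add_lt_sum hrl
  · exact blockStart_add_lt_sum hr

lemma lt_iff_of_eq (hdec : IsBlockDecomposition n kk aa rr) {a : Fin p} {i j : ℕ}
    (hi : aa i = a) (hj : aa j = a) : i < j ↔ kk i * n a + rr i < kk j * n a + rr j := by
  obtain ⟨hri, hli⟩ := hdec i
  obtain ⟨hrj, hlj⟩ := hdec j
  rw [hi] at hri hli
  rw [hj] at hrj hlj
  conv_lhs => rw [hli, hlj, add_assoc, add_assoc]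
  rw [Nat.mul_add_lt_mul_add_iff (blockStart_add_lt_sum hri)
    (blockStart_add_lt_sum hrj), Nat.mul_add_lt_mul_add_iff hri hrj,
    Nat.add_lt_add_iff_left]

lemma exists_eq_mul_add (hdec : IsBlockDecomposition n kk aa rr) {a : Fin p} (ha : 0 < n a)
    (m : ℕ) : ∃ i, aa i = a ∧ kk i * n a + rr i = m := by
  obtain ⟨hk, hb, hr⟩ := hdec.eq_of_eq_mul_add (Nat.mod_lt m ha) rfl
  exact ⟨_, hb, by rw [hk, hr, Nat.div_add_mod']⟩

end IsBlockDecomposition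

theorem stmt_4_general (p : ℕ) (n : Fin p → ℕ) (hn : ∀ a, 1 ≤ n a)
    (kk : ℕ → ℕ) (aa : ℕ → Fin p) (rr : ℕ → ℕ)
    (hdec : ∀ l, rr l < n (aa l) ∧
      l = kk l * (∑ b, n b) +
          (∑ i ∈ Finset.univ.filter (fun i => i < aa l), n i) + rr l)
    (a : Fin p) (l : ℕ)
    (T : Finset ℕ) (hT : T = (Finset.range (l + 1)).filter (fun i => aa i = a))
    (f : ℕ → ℕ) (hf : ∀ i, f i = kk i * n a + rr i) :
    StrictMonoOn f ↑T ∧ Set.BijOn f ↑T ↑(Finset.range T.card) := by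
  have hdec : IsBlockDecomposition n kk aa rr := hdec
  obtain rfl : f = fun i => kk i * n a + rr i := funext hf
  have hmono : StrictMonoOn (fun i => kk i * n a + rr i) (Set.ofPred (aa · = a)) :=
    fun i hi j hj => (hdec.lt_iff_of_eq hi hj).mp
  have hsurj : Set.SurjOn (fun i => kk i * n a + rr i) (Set.ofPred (aa · = a)) Set.univ :=
    fun m _ => hdec.exists_eq_mul_add (hn a) m
  subst hT
  refine ⟨hmono.mono fun i hi => (mem_filter.mp hi).2, ?_⟩
  rw [← Nat.count_eq_card_filter_range]
  refine (Nat.bijOn_count_filter_range _ _).congr fun i hi => ?_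
  exact Nat.count_eq_of_strictMonoOn_of_surjOn hmono hsurj (mem_filter.mp hi).2

/-- The exponents `k(i)·n_a + r(i)` of the type-`a` entries of the monomial string,
for positions `i ≤ l`, form a strictly increasing enumeration of `{0, …, c−1}`,
where `c` is the number of such positions. -/
theorem stmt_4 (p : ℕ) (hp : 1 ≤ p) (n : Fin p → ℕ) (hn : ∀ a, 1 ≤ n a)
    (kk : ℕ → ℕ) (aa : ℕ → Fin p) (rr : ℕ → ℕ)
    (hdec : ∀ l, rr l < n (aa l) ∧
      l = kk l * (∑ b, n b) +
          (∑ i ∈ Finset.univ.filter (fun i => i < aa l), n i) + rr l)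
    (a : Fin p) (l : ℕ)
    (T : Finset ℕ) (hT : T = (Finset.range (l + 1)).filter (fun i => aa i = a))
    (f : ℕ → ℕ) (hf : ∀ i, f i = kk i * n a + rr i) :
    StrictMonoOn f ↑T ∧ Set.BijOn f ↑T ↑(Finset.range T.card) :=
  stmt_4_general p n hn kk aa rr hdec a l T hT f hf
end

section
/- Let μ, weights w_{1,a}, w_{2,b}, compositions n₁, n₂, weighted strings ξ₁, ξ₂ and the moment matrix g be as in the standard setup, with x ↦ x^m w_{1,a}(x) w_{2,b}(x) μ-integrable for all m, a, b. Let S̄' be a semi-infinite upper triangular real matrix (S̄'_{j,l} = 0 for j > l) such that gS̄' is lower triangular, i.e. Σ_{j=0}^{l} g_{i,j} S̄'_{j,l} = 0 for all i < l. Define the dual linear form Q̄^{(l)}(x) = Σ_{j=0}^{l} S̄'_{j,l} ξ₂^{(j)}(x). Then for every a ∈ {1,…,p₁} and every integer k with 0 ≤ k ≤ ν_{1,a}(l−1) − 1, where ν_{1,a}(l−1) := #{i : 0 ≤ i ≤ l−1, a₁(i) = a}, one has ∫ Q̄^{(l)}(x) w_{1,a}(x) x^k dμ(x) = 0. -/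
/-!
Write `deg i = kk₁ i * n₁ (aa₁ i) + rr₁ i` for the exponent of `ξ₁⁽ⁱ⁾`. Along the indices of a
fixed block `a` the degrees run through `0, 1, 2, …` in increasing order, so the `k`-th index of
block `a` is the index `i` with `ξ₁⁽ⁱ⁾ = w_{1,a} xᵏ`; when `k < ν_{1,a}(l-1)` this index is
`< l`. Hence `∫ Q̄⁽ˡ⁾ w_{1,a} xᵏ dμ = Σ_j g_{i,j} S̄'_{j,l}`, an above-diagonal entry of `gS̄'`,
which vanishes.
-/

open MeasureTheory

lemma StrictMono.lt_of_lt_card_filter {f : ℕ → ℕ} (hf : StrictMono f) {P : ℕ → Prop}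
    [DecidablePred P] (hP : ∀ i, P i → i ∈ Set.range f) {k l : ℕ}
    (hk : k < ((Finset.range l).filter P).card) : f k < l := by
  by_contra! hl
  have hsub : (Finset.range l).filter P ⊆ (Finset.range k).image f := by
    intro i hi
    obtain ⟨hil, hPi⟩ := Finset.mem_filter.1 hi
    obtain ⟨d, rfl⟩ := hP i hPi
    have hdk : f d < f k := (Finset.mem_range.1 hil).trans_le hl
    exact Finset.mem_image_of_mem f (Finset.mem_range.2 (hf.lt_iff_lt.1 hdk))
  have := (Finset.card_le_card hsub).trans Finset.card_image_le
  rw [Finset.card_range] at this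
  omega

lemma Nat.strictMono_div_mul_add_mod {m N : ℕ} (hm : 0 < m) (hmN : m ≤ N) :
    StrictMono fun d => d / m * N + d % m := by
  intro d e hde
  have hq : d / m ≤ e / m := Nat.div_le_div_right hde.le
  rcases hq.eq_or_lt with hq | hq
  · have := Nat.div_add_mod d m
    have := Nat.div_add_mod e m
    simp only [hq]
    nlinarith
  · have := Nat.mod_lt d hm
    calc d / m * N + d % m < (d / m + 1) * N := by nlinarith
      _ ≤ e / m * N + e % m := (Nat.mul_le_mul_right N hq).trans (Nat.le_add_right _ _)

lemma integral_sum_mul_eq_sum_integral_mul {μ : Measure ℝ} {ι : Type*} (s : Finset ι)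
    (c : ι → ℝ) (ψ : ι → ℝ → ℝ) (φ : ℝ → ℝ)
    (h : ∀ j ∈ s, Integrable (fun x => φ x * ψ j x) μ) :
    ∫ x, (∑ j ∈ s, c j * ψ j x) * φ x ∂μ = ∑ j ∈ s, (∫ x, φ x * ψ j x ∂μ) * c j := by
  simp_rw [Finset.sum_mul]
  rw [integral_finsetSum s fun j hj => ((h j hj).const_mul (c j)).congr
    (Filter.Eventually.of_forall fun x => by ring)]
  refine Finset.sum_congr rfl fun j _ => ?_
  rw [← integral_mul_const]
  congr 1 with x
  ring

namespace BlockIndex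

variable {p : ℕ} (n : Fin p → ℕ)

def blockOffset (a : Fin p) : ℕ := ∑ i ∈ Finset.univ.filter (· < a), n i

lemma blockOffset_add_self (a : Fin p) :
    blockOffset n a + n a = ∑ i ∈ Finset.Iic a, n i := by
  rw [blockOffset, Finset.filter_gt_eq_Iio, ← Finset.Iio_insert,
    Finset.sum_insert Finset.notMem_Iio_self, add_comm]

lemma blockOffset_add_self_le_sum (a : Fin p) : blockOffset n a + n a ≤ ∑ b, n b := by
  rw [blockOffset_add_self]
  exact Finset.sum_le_sum_of_subset (Finset.subset_univ _)

lemma blockOffset_add_self_le_of_lt {a b : Fin p} (hab : a < b) :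
    blockOffset n a + n a ≤ blockOffset n b := by
  rw [blockOffset_add_self, blockOffset, Finset.filter_gt_eq_Iio]
  exact Finset.sum_le_sum_of_subset fun i hi =>
    Finset.mem_Iio.2 ((Finset.mem_Iic.1 hi).trans_lt hab)

lemma div_sum_eq_and_mod_sum_eq {k : ℕ} {a : Fin p} {r : ℕ} (hr : r < n a) :
    (k * (∑ b, n b) + blockOffset n a + r) / ∑ b, n b = k ∧
      (k * (∑ b, n b) + blockOffset n a + r) % ∑ b, n b = blockOffset n a + r := by
  have hlt : blockOffset n a + r < ∑ b, n b := by
    have := blockOffset_add_self_le_sum n a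
    omega
  rw [add_assoc, add_comm, Nat.add_mul_div_right _ _ (by omega), Nat.add_mul_mod_self_right,
    Nat.div_eq_of_lt hlt, Nat.mod_eq_of_lt hlt, zero_add]
  exact ⟨rfl, rfl⟩

lemma decomposition_unique {k₁ k₂ : ℕ} {a₁ a₂ : Fin p} {r₁ r₂ : ℕ}
    (h₁ : r₁ < n a₁) (h₂ : r₂ < n a₂)
    (heq : k₁ * (∑ b, n b) + blockOffset n a₁ + r₁ = k₂ * (∑ b, n b) + blockOffset n a₂ + r₂) :
    k₁ = k₂ ∧ a₁ = a₂ ∧ r₁ = r₂ := by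
  obtain ⟨hk₁, ho₁⟩ := div_sum_eq_and_mod_sum_eq n (k := k₁) h₁
  obtain ⟨hk₂, ho₂⟩ := div_sum_eq_and_mod_sum_eq n (k := k₂) h₂
  rw [heq] at hk₁ ho₁
  have ho : blockOffset n a₁ + r₁ = blockOffset n a₂ + r₂ := ho₁.symm.trans ho₂
  have ha : a₁ = a₂ := by
    rcases lt_trichotomy a₁ a₂ with hlt | heq | hlt
    · have := blockOffset_add_self_le_of_lt n hlt
      omega
    · exact heq
    · have := blockOffset_add_self_le_of_lt n hlt
      omega
  subst ha
  exact ⟨hk₁.symm.trans hk₂, rfl, by omega⟩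

/-- The index `i` of block `a` whose weighted monomial has exponent `kk i * n a + rr i = d`. -/
def indexOfDegree (a : Fin p) (d : ℕ) : ℕ := d / n a * (∑ b, n b) + blockOffset n a + d % n a

lemma strictMono_indexOfDegree {a : Fin p} (ha : 0 < n a) : StrictMono (indexOfDegree n a) := by
  intro d e hde
  have := Nat.strictMono_div_mul_add_mod ha
    (Finset.single_le_sum (fun b _ => (n b).zero_le) (Finset.mem_univ a)) hde
  dsimp only at this
  unfold indexOfDegree
  omega

def IsDecomposition (kk : ℕ → ℕ) (aa : ℕ → Fin p) (rr : ℕ → ℕ) : Prop :=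
  ∀ l, rr l < n (aa l) ∧ l = kk l * (∑ b, n b) + blockOffset n (aa l) + rr l

variable {n} {kk : ℕ → ℕ} {aa : ℕ → Fin p} {rr : ℕ → ℕ}

lemma block_and_degree_indexOfDegree (hdec : IsDecomposition n kk aa rr) {a : Fin p}
    (ha : 0 < n a) (d : ℕ) :
    aa (indexOfDegree n a d) = a ∧
      kk (indexOfDegree n a d) * n a + rr (indexOfDegree n a d) = d := by
  obtain ⟨hr, hi⟩ := hdec (indexOfDegree n a d)
  obtain ⟨hk, haa, hr⟩ := decomposition_unique n hr (Nat.mod_lt d ha) hi.symm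
  rw [hk, haa, hr]
  exact ⟨rfl, Nat.div_add_mod' d _⟩

lemma indexOfDegree_degree (hdec : IsDecomposition n kk aa rr) {i : ℕ} {a : Fin p}
    (hi : aa i = a) :
    indexOfDegree n a (kk i * n a + rr i) = i := by
  obtain ⟨hr, hdeci⟩ := hdec i
  rw [hi] at hr hdeci
  have hdiv : (kk i * n a + rr i) / n a = kk i := by
    rw [add_comm, Nat.add_mul_div_right _ _ (by omega), Nat.div_eq_of_lt hr, zero_add]
  have hmod : (kk i * n a + rr i) % n a = rr i := by
    rw [add_comm, Nat.add_mul_mod_self_right, Nat.mod_eq_of_lt hr]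
  rw [indexOfDegree, hdiv, hmod, ← hdeci]

lemma pos_of_lt_card_filter (hdec : IsDecomposition n kk aa rr) {a : Fin p} {k l : ℕ}
    (hk : k < ((Finset.range l).filter (fun i => aa i = a)).card) : 0 < n a := by
  obtain ⟨i, hi⟩ := Finset.card_pos.1 (k.zero_le.trans_lt hk)
  exact (Finset.mem_filter.1 hi).2 ▸ (hdec i).1.pos

lemma indexOfDegree_lt (hdec : IsDecomposition n kk aa rr) {a : Fin p} {k l : ℕ}
    (hk : k < ((Finset.range l).filter (fun i => aa i = a)).card) :
    indexOfDegree n a k < l :=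
  (strictMono_indexOfDegree n (pos_of_lt_card_filter hdec hk)).lt_of_lt_card_filter
    (fun _ hi => ⟨_, indexOfDegree_degree hdec hi⟩) hk

end BlockIndex

theorem stmt_10_general
    (μ : Measure ℝ)
    (p₁ p₂ : ℕ)
    (n₁ : Fin p₁ → ℕ)
    (n₂ : Fin p₂ → ℕ)
    (w₁ : Fin p₁ → ℝ → ℝ) (w₂ : Fin p₂ → ℝ → ℝ)
    (hint : ∀ (m : ℕ) (a : Fin p₁) (b : Fin p₂),
      Integrable (fun x => x ^ m * w₁ a x * w₂ b x) μ)
    (kk₁ : ℕ → ℕ) (aa₁ : ℕ → Fin p₁) (rr₁ : ℕ → ℕ)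
    (hdec₁ : ∀ l, rr₁ l < n₁ (aa₁ l) ∧
      l = kk₁ l * (∑ b, n₁ b) +
          (∑ i ∈ Finset.univ.filter (fun i => i < aa₁ l), n₁ i) + rr₁ l)
    (kk₂ : ℕ → ℕ) (aa₂ : ℕ → Fin p₂) (rr₂ : ℕ → ℕ)
    (ξ₁ : ℕ → ℝ → ℝ)
    (hξ₁ : ∀ i x, ξ₁ i x = w₁ (aa₁ i) x * x ^ (kk₁ i * n₁ (aa₁ i) + rr₁ i))
    (ξ₂ : ℕ → ℝ → ℝ)
    (hξ₂ : ∀ j x, ξ₂ j x = w₂ (aa₂ j) x * x ^ (kk₂ j * n₂ (aa₂ j) + rr₂ j))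
    (g : ℕ → ℕ → ℝ)
    (hg : ∀ i j, g i j = ∫ x, ξ₁ i x * ξ₂ j x ∂μ)
    (Sbar' : ℕ → ℕ → ℝ)
    (hgSbar'_lower : ∀ l i, i < l → ∑ j ∈ Finset.range (l + 1), g i j * Sbar' j l = 0)
    (Qbar : ℕ → ℝ → ℝ)
    (hQbar : ∀ l x, Qbar l x = ∑ j ∈ Finset.range (l + 1), Sbar' j l * ξ₂ j x)
    (l : ℕ) (a : Fin p₁) (k : ℕ)
    (hk : k < ((Finset.range l).filter (fun i => aa₁ i = a)).card) :
    ∫ x, Qbar l x * w₁ a x * x ^ k ∂μ = 0 := by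
  set i := BlockIndex.indexOfDegree n₁ a k
  have hil : i < l := BlockIndex.indexOfDegree_lt hdec₁ hk
  have hξ₁i : ∀ x, w₁ a x * x ^ k = ξ₁ i x := by
    obtain ⟨haa, hdeg⟩ :=
      BlockIndex.block_and_degree_indexOfDegree hdec₁
        (BlockIndex.pos_of_lt_card_filter hdec₁ hk) k
    intro x
    rw [hξ₁, haa, hdeg]
  have hint_ij : ∀ j, Integrable (fun x => ξ₁ i x * ξ₂ j x) μ := fun j =>
    (hint (kk₁ i * n₁ (aa₁ i) + rr₁ i + (kk₂ j * n₂ (aa₂ j) + rr₂ j)) (aa₁ i) (aa₂ j)).congr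
      (Filter.Eventually.of_forall fun x => by simp only [hξ₁, hξ₂, pow_add]; ring)
  calc ∫ x, Qbar l x * w₁ a x * x ^ k ∂μ
      = ∫ x, (∑ j ∈ Finset.range (l + 1), Sbar' j l * ξ₂ j x) * ξ₁ i x ∂μ := by
        simp_rw [hQbar, mul_assoc, hξ₁i]
    _ = ∑ j ∈ Finset.range (l + 1), g i j * Sbar' j l := by
        rw [integral_sum_mul_eq_sum_integral_mul _ _ _ _ fun j _ => hint_ij j]
        simp_rw [hg]
    _ = 0 := hgSbar'_lower l i hil

/-- Orthogonality relations for the dual linear forms `Q̄⁽ˡ⁾ = Σ_{j≤l} S̄′_{j,l} ξ₂⁽ʲ⁾`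
coming from an upper triangular `S̄′` making `gS̄′` lower triangular:
`∫ Q̄⁽ˡ⁾(x) w_{1,a}(x) xᵏ dμ = 0` for `0 ≤ k ≤ ν_{1,a}(l−1) − 1`. -/
theorem stmt_10
    (μ : Measure ℝ) [IsFiniteMeasure μ]
    (p₁ p₂ : ℕ) (hp₁ : 1 ≤ p₁) (hp₂ : 1 ≤ p₂)
    (n₁ : Fin p₁ → ℕ) (hn₁ : ∀ a, 1 ≤ n₁ a)
    (n₂ : Fin p₂ → ℕ) (hn₂ : ∀ b, 1 ≤ n₂ b)
    (w₁ : Fin p₁ → ℝ → ℝ) (w₂ : Fin p₂ → ℝ → ℝ)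
    (hw₁ : ∀ a, Measurable (w₁ a)) (hw₂ : ∀ b, Measurable (w₂ b))
    (hint : ∀ (m : ℕ) (a : Fin p₁) (b : Fin p₂),
      Integrable (fun x => x ^ m * w₁ a x * w₂ b x) μ)
    (kk₁ : ℕ → ℕ) (aa₁ : ℕ → Fin p₁) (rr₁ : ℕ → ℕ)
    (hdec₁ : ∀ l, rr₁ l < n₁ (aa₁ l) ∧
      l = kk₁ l * (∑ b, n₁ b) +
          (∑ i ∈ Finset.univ.filter (fun i => i < aa₁ l), n₁ i) + rr₁ l)
    (kk₂ : ℕ → ℕ) (aa₂ : ℕ → Fin p₂) (rr₂ : ℕ → ℕ)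
    (hdec₂ : ∀ l, rr₂ l < n₂ (aa₂ l) ∧
      l = kk₂ l * (∑ b, n₂ b) +
          (∑ i ∈ Finset.univ.filter (fun i => i < aa₂ l), n₂ i) + rr₂ l)
    (ξ₁ : ℕ → ℝ → ℝ)
    (hξ₁ : ∀ i x, ξ₁ i x = w₁ (aa₁ i) x * x ^ (kk₁ i * n₁ (aa₁ i) + rr₁ i))
    (ξ₂ : ℕ → ℝ → ℝ)
    (hξ₂ : ∀ j x, ξ₂ j x = w₂ (aa₂ j) x * x ^ (kk₂ j * n₂ (aa₂ j) + rr₂ j))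
    (g : ℕ → ℕ → ℝ)
    (hg : ∀ i j, g i j = ∫ x, ξ₁ i x * ξ₂ j x ∂μ)
    (Sbar' : ℕ → ℕ → ℝ)
    (hSbar'_tri : ∀ j l, l < j → Sbar' j l = 0)
    (hgSbar'_lower : ∀ l i, i < l → ∑ j ∈ Finset.range (l + 1), g i j * Sbar' j l = 0)
    (Qbar : ℕ → ℝ → ℝ)
    (hQbar : ∀ l x, Qbar l x = ∑ j ∈ Finset.range (l + 1), Sbar' j l * ξ₂ j x)
    (l : ℕ) (a : Fin p₁) (k : ℕ)
    (hk : k < ((Finset.range l).filter (fun i => aa₁ i = a)).card) :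
    ∫ x, Qbar l x * w₁ a x * x ^ k ∂μ = 0 :=
  stmt_10_general μ p₁ p₂ n₁ n₂ w₁ w₂ hint kk₁ aa₁ rr₁ hdec₁ kk₂ aa₂ rr₂ ξ₁ hξ₁ ξ₂ hξ₂ g hg Sbar'
    hgSbar'_lower Qbar hQbar l a k hk
end

section
/- Let n₁, n₂ be compositions with shift maps σ₁, σ₂ (σ_α(l) = min{m ≥ l+1 : a_α(m) = a_α(l)}). Let g be a semi-infinite real matrix satisfying the Hankel-type symmetry g_{σ₁(i),j} = g_{i,σ₂(j)} for all i, j. Let S, S' be mutually inverse lower unitriangular matrices and S̄, S̄' mutually inverse upper triangular matrices such that g = S'S̄ entrywise, i.e. g_{i,j} = Σ_k S'_{i,k} S̄_{k,j} (finite sums), equivalently Sg = S̄. Then SΥ₁S' = S̄Υ₂ᵀS̄' entrywise; explicitly, for all l, m: Σ_{i=0}^{l} S_{l,i} S'_{σ₁(i),m} = Σ_j S̄_{l,σ₂(j)} S̄'_{j,m}, both sides being finite sums. -/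
/-!
Write `L = S'`, `U = S̄` and `U' = S̄'`. From `g = L U` and the triangularity of the factors,
`S g = U` (using `S L = 1`) and `g U' = L` (using `U U' = 1`). Hence
`S Υ₁ L = S Υ₁ g U' = S g Υ₂ᵀ U' = U Υ₂ᵀ U'`, the middle step being the Hankel symmetry.
All products that occur are finite because of the triangular shapes.
-/

open Finset

section GaussBorel

variable {R : Type*} [CommSemiring R]

theorem sum_range_mul_eq_of_triangular {A B : ℕ → ℕ → R}
    (hA : ∀ i k, i < k → A i k = 0) (hB : ∀ k j, j < k → B k j = 0)
    {i j N : ℕ} (hN : min i j < N) :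
    ∑ k ∈ range N, A i k * B k j = ∑ k ∈ range (min i j + 1), A i k * B k j := by
  refine (sum_subset (range_subset_range.2 hN) fun k _ hk => ?_).symm
  rcases lt_or_ge i k with hik | hik
  · rw [hA i k hik, zero_mul]
  · rw [hB k j (by simp only [mem_range] at hk; omega), mul_zero]

theorem sum_leftInv_mul_eq_of_factorization {S L U g : ℕ → ℕ → R}
    (hL : ∀ i j, i < j → L i j = 0) (hU : ∀ i j, j < i → U i j = 0)
    (hSL : ∀ l m, ∑ k ∈ range (max l m + 1), S l k * L k m = if l = m then 1 else 0)
    (hg : ∀ i j, g i j = ∑ k ∈ range (min i j + 1), L i k * U k j) (l j : ℕ) :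
    ∑ i ∈ range (l + 1), S l i * g i j = U l j := by
  calc ∑ i ∈ range (l + 1), S l i * g i j
      = ∑ i ∈ range (l + 1), ∑ k ∈ range (l + 1), S l i * (L i k * U k j) := by
        refine sum_congr rfl fun i hi => ?_
        have hil : min i j < l + 1 := by simp only [mem_range] at hi; omega
        rw [hg, ← sum_range_mul_eq_of_triangular hL hU hil, mul_sum]
    _ = ∑ k ∈ range (l + 1), (∑ i ∈ range (l + 1), S l i * L i k) * U k j := by
        rw [sum_comm]
        simp only [sum_mul, mul_assoc]
    _ = ∑ k ∈ range (l + 1), if l = k then U k j else 0 := by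
        refine sum_congr rfl fun k hk => ?_
        have hkl : l + 1 = max l k + 1 := by simp only [mem_range] at hk; omega
        rw [hkl, hSL]
        split_ifs <;> simp
    _ = U l j := by simp

theorem sum_mul_rightInv_eq_of_factorization {L U U' g : ℕ → ℕ → R}
    (hL : ∀ i j, i < j → L i j = 0) (hU : ∀ i j, j < i → U i j = 0)
    (hUU' : ∀ l m, ∑ k ∈ range (max l m + 1), U l k * U' k m = if l = m then 1 else 0)
    (hg : ∀ i j, g i j = ∑ k ∈ range (min i j + 1), L i k * U k j) (i m : ℕ) :
    ∑ k ∈ range (m + 1), g i k * U' k m = L i m := by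
  have := sum_leftInv_mul_eq_of_factorization (S := fun a b => U' b a) (L := fun a b => U b a)
    (U := fun a b => L b a) (g := fun a b => g b a) (fun a b h => hU b a h)
    (fun a b h => hL b a h) (fun a b => by simp only [mul_comm, max_comm a b, hUU', eq_comm])
    (fun a b => by simp only [hg b a, mul_comm, min_comm]) m i
  simpa only [mul_comm] using this

end GaussBorel

theorem stmt_14_general
    (σ₁ : ℕ → ℕ)
    (σ₂ : ℕ → ℕ)
    (g : ℕ → ℕ → ℝ)
    (hsym : ∀ i j, g (σ₁ i) j = g i (σ₂ j))
    (S S' : ℕ → ℕ → ℝ)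
    (hS'_tri : ∀ i j, i < j → S' i j = 0)
    (hinv₁ : ∀ l m, ∑ k ∈ Finset.range (max l m + 1), S l k * S' k m =
      if l = m then 1 else 0)
    (Sbar Sbar' : ℕ → ℕ → ℝ)
    (hSbar_tri : ∀ i j, j < i → Sbar i j = 0)
    (hinv₃ : ∀ l m, ∑ k ∈ Finset.range (max l m + 1), Sbar l k * Sbar' k m =
      if l = m then 1 else 0)
    (hfact : ∀ i j, g i j = ∑ k ∈ Finset.range (min i j + 1), S' i k * Sbar k j) :
    ∀ l m, ∑ i ∈ Finset.range (l + 1), S l i * S' (σ₁ i) m =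
      ∑ j ∈ Finset.range (m + 1), Sbar l (σ₂ j) * Sbar' j m := by
  intro l m
  calc ∑ i ∈ range (l + 1), S l i * S' (σ₁ i) m
      = ∑ i ∈ range (l + 1), ∑ k ∈ range (m + 1), S l i * g (σ₁ i) k * Sbar' k m := by
        simp only [← sum_mul_rightInv_eq_of_factorization hS'_tri hSbar_tri hinv₃ hfact, mul_sum,
          mul_assoc]
    _ = ∑ k ∈ range (m + 1), (∑ i ∈ range (l + 1), S l i * g i (σ₂ k)) * Sbar' k m := by
        rw [sum_comm]
        simp only [hsym, sum_mul]
    _ = ∑ k ∈ range (m + 1), Sbar l (σ₂ k) * Sbar' k m := by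
        simp only [sum_leftInv_mul_eq_of_factorization hS'_tri hSbar_tri hinv₁ hfact]

/-- Equality of the two expressions for the Jacobi-type matrix:
if `g` satisfies the Hankel-type symmetry `Υ₁g = gΥ₂ᵀ` and has the Gauss--Borel
factorization `g = S⁻¹S̄`, then `SΥ₁S⁻¹ = S̄Υ₂ᵀS̄⁻¹` entrywise. -/
theorem stmt_14 (p₁ p₂ : ℕ) (hp₁ : 1 ≤ p₁) (hp₂ : 1 ≤ p₂)
    (n₁ : Fin p₁ → ℕ) (hn₁ : ∀ a, 1 ≤ n₁ a)
    (n₂ : Fin p₂ → ℕ) (hn₂ : ∀ b, 1 ≤ n₂ b)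
    (kk₁ : ℕ → ℕ) (aa₁ : ℕ → Fin p₁) (rr₁ : ℕ → ℕ)
    (hdec₁ : ∀ l, rr₁ l < n₁ (aa₁ l) ∧
      l = kk₁ l * (∑ b, n₁ b) +
          (∑ i ∈ Finset.univ.filter (fun i => i < aa₁ l), n₁ i) + rr₁ l)
    (kk₂ : ℕ → ℕ) (aa₂ : ℕ → Fin p₂) (rr₂ : ℕ → ℕ)
    (hdec₂ : ∀ l, rr₂ l < n₂ (aa₂ l) ∧
      l = kk₂ l * (∑ b, n₂ b) +
          (∑ i ∈ Finset.univ.filter (fun i => i < aa₂ l), n₂ i) + rr₂ l)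
    (σ₁ : ℕ → ℕ)
    (hσ₁ : ∀ l, l + 1 ≤ σ₁ l ∧ aa₁ (σ₁ l) = aa₁ l ∧
      ∀ m, l + 1 ≤ m → aa₁ m = aa₁ l → σ₁ l ≤ m)
    (σ₂ : ℕ → ℕ)
    (hσ₂ : ∀ l, l + 1 ≤ σ₂ l ∧ aa₂ (σ₂ l) = aa₂ l ∧
      ∀ m, l + 1 ≤ m → aa₂ m = aa₂ l → σ₂ l ≤ m)
    (g : ℕ → ℕ → ℝ)
    (hsym : ∀ i j, g (σ₁ i) j = g i (σ₂ j))
    (S S' : ℕ → ℕ → ℝ)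
    (hS_tri : ∀ i j, i < j → S i j = 0) (hS_diag : ∀ i, S i i = 1)
    (hS'_tri : ∀ i j, i < j → S' i j = 0) (hS'_diag : ∀ i, S' i i = 1)
    (hinv₁ : ∀ l m, ∑ k ∈ Finset.range (max l m + 1), S l k * S' k m =
      if l = m then 1 else 0)
    (hinv₂ : ∀ l m, ∑ k ∈ Finset.range (max l m + 1), S' l k * S k m =
      if l = m then 1 else 0)
    (Sbar Sbar' : ℕ → ℕ → ℝ)
    (hSbar_tri : ∀ i j, j < i → Sbar i j = 0)
    (hSbar'_tri : ∀ i j, j < i → Sbar' i j = 0)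
    (hinv₃ : ∀ l m, ∑ k ∈ Finset.range (max l m + 1), Sbar l k * Sbar' k m =
      if l = m then 1 else 0)
    (hinv₄ : ∀ l m, ∑ k ∈ Finset.range (max l m + 1), Sbar' l k * Sbar k m =
      if l = m then 1 else 0)
    (hfact : ∀ i j, g i j = ∑ k ∈ Finset.range (min i j + 1), S' i k * Sbar k j) :
    ∀ l m, ∑ i ∈ Finset.range (l + 1), S l i * S' (σ₁ i) m =
      ∑ j ∈ Finset.range (m + 1), Sbar l (σ₂ j) * Sbar' j m :=
  stmt_14_general σ₁ σ₂ g hsym S S' hS'_tri hinv₁ Sbar Sbar' hSbar_tri hinv₃ hfact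
end

section
/- Let J be a semi-infinite real matrix which is banded, i.e. there is N ∈ ℕ with J_{i,j} = 0 whenever |i − j| > N. Let q, q̄ : ℤ_{≥0} → ℝ be sequences and x, y ∈ ℝ scalars such that Σ_j J_{i,j} q_j = y·q_i for all i and Σ_i q̄_i J_{i,j} = x·q̄_j for all j (all sums finite by bandedness). Then for every l ∈ ℤ_{≥0}: (y − x)·Σ_{k=0}^{l−1} q_k q̄_k = Σ_{i=0}^{l−1} Σ_{j≥l} q̄_i J_{i,j} q_j − Σ_{i≥l} Σ_{j=0}^{l−1} q̄_i J_{i,j} q_j, where both double sums have finitely many nonzero terms. -/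
/-! Put `a i j = q̄ i * J i j * q j`. By the eigenvalue relations the `i`-th row of `a` sums to
`y q̄ i q i` and its `j`-th column to `x q̄ j q j`. Subtracting the sum of the first `l` columns from
the sum of the first `l` rows, the `l × l` corner cancels, leaving `(y - x) Σ_{k<l} q k q̄ k` on one
side and the two off-diagonal blocks on the other. Bandedness keeps all these sums inside
`{0, …, l + N - 1}²`, so they are finite. -/

open Finset Function

theorem Finset.sum_range_sum_range_sub_sum_range_sum_range {G : Type*} [AddCommGroup G]
    (a : ℕ → ℕ → G) {l M : ℕ} (h : l ≤ M) :
    ∑ i ∈ range l, ∑ j ∈ range M, a i j - ∑ j ∈ range l, ∑ i ∈ range M, a i j =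
      ∑ i ∈ range l, ∑ j ∈ Ico l M, a i j - ∑ j ∈ range l, ∑ i ∈ Ico l M, a i j := by
  simp only [← sum_range_add_sum_Ico _ h, sum_add_distrib]
  rw [sum_comm (s := range l) (t := range l)]
  abel

def IsBanded {R : Type*} [Zero R] (J : ℕ → ℕ → R) (N : ℕ) : Prop :=
  ∀ ⦃i j⦄, J i j ≠ 0 → j ≤ i + N ∧ i ≤ j + N

theorem isBanded_of_forall_lt_sub {R : Type*} [Zero R] {J : ℕ → ℕ → R} {N : ℕ}
    (hband : ∀ i j : ℕ, (N < i - j ∨ N < j - i) → J i j = 0) : IsBanded J N := by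
  intro i j hij
  by_contra h
  exact hij (hband i j (by omega))

namespace IsBanded

section Zero

variable {R : Type*} [Zero R] {J : ℕ → ℕ → R} {N : ℕ}

theorem transpose (hJ : IsBanded J N) : IsBanded (fun i j => J j i) N :=
  fun _ _ h => (hJ h).symm

theorem support_subset_Iio (hJ : IsBanded J N) {i l : ℕ} (hi : i < l) :
    support (J i) ⊆ Set.Iio (l + N) :=
  fun j hj => by have := hJ hj; simp only [Set.mem_Iio]; omega

theorem finite_setOf_fst_lt (hJ : IsBanded J N) (l : ℕ) :
    {ij : ℕ × ℕ | ij.1 < l ∧ J ij.1 ij.2 ≠ 0}.Finite :=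
  ((Set.finite_Iio l).prod (Set.finite_Iio (l + N))).subset fun _ ⟨hi, hij⟩ =>
    ⟨hi, hJ.support_subset_Iio hi hij⟩

theorem finite_setOf_snd_lt (hJ : IsBanded J N) (l : ℕ) :
    {ij : ℕ × ℕ | ij.2 < l ∧ J ij.1 ij.2 ≠ 0}.Finite :=
  ((Set.finite_Iio (l + N)).prod (Set.finite_Iio l)).subset fun _ ⟨hj, hij⟩ =>
    ⟨hJ.transpose.support_subset_Iio hj hij, hj⟩

end Zero

theorem mul_mul {R : Type*} [MulZeroClass R] {J : ℕ → ℕ → R} {N : ℕ} (hJ : IsBanded J N)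
    (u v : ℕ → R) : IsBanded (fun i j => u i * J i j * v j) N :=
  fun _ _ h => hJ (right_ne_zero_of_mul (left_ne_zero_of_mul h))

section AddCommGroup

variable {G : Type*} [AddCommGroup G] {a : ℕ → ℕ → G} {N : ℕ}

theorem finsum_eq_sum_range (ha : IsBanded a N) {i l : ℕ} (hi : i < l) :
    ∑ᶠ j, a i j = ∑ j ∈ range (l + N), a i j :=
  finsum_eq_sum_of_support_subset _ (by simpa using ha.support_subset_Iio hi)

theorem finsum_mem_Ici_eq_sum_Ico (ha : IsBanded a N) {i l : ℕ} (hi : i < l) :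
    ∑ᶠ j ∈ Set.Ici l, a i j = ∑ j ∈ Ico l (l + N), a i j :=
  finsum_mem_eq_sum_of_subset _
    (fun j ⟨hj, hij⟩ => by simpa using ⟨hj, ha.support_subset_Iio hi hij⟩)
    (fun j hj => (mem_Ico.mp hj).1)

theorem sum_finsum_sub_sum_finsum (ha : IsBanded a N) (l : ℕ) :
    ∑ i ∈ range l, ∑ᶠ j, a i j - ∑ j ∈ range l, ∑ᶠ i, a i j =
      ∑ i ∈ range l, ∑ᶠ j ∈ Set.Ici l, a i j - ∑ j ∈ range l, ∑ᶠ i ∈ Set.Ici l, a i j := by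
  have hrow {i} (hi : i ∈ range l) := ha.finsum_eq_sum_range (mem_range.mp hi)
  have hcol {j} (hj : j ∈ range l) := ha.transpose.finsum_eq_sum_range (mem_range.mp hj)
  have hrow' {i} (hi : i ∈ range l) := ha.finsum_mem_Ici_eq_sum_Ico (mem_range.mp hi)
  have hcol' {j} (hj : j ∈ range l) := ha.transpose.finsum_mem_Ici_eq_sum_Ico (mem_range.mp hj)
  rw [sum_congr rfl fun i => hrow, sum_congr rfl fun j => hcol, sum_congr rfl fun i => hrow',
    sum_congr rfl fun j => hcol']
  exact sum_range_sum_range_sub_sum_range_sum_range a (Nat.le_add_right l N)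

end AddCommGroup

end IsBanded

/-- Abstract Christoffel--Darboux identity for a banded matrix `J` with left
and right eigenvectors `q̄`, `q`:
`(y − x)·Σ_{k<l} q_k q̄_k = Σ_{i<l} Σ_{j≥l} q̄_i J_{i,j} q_j − Σ_{j<l} Σ_{i≥l} q̄_i J_{i,j} q_j`,
both double sums having finitely many nonzero terms. -/
theorem stmt_16 (J : ℕ → ℕ → ℝ) (N : ℕ)
    (hband : ∀ i j : ℕ, (N < i - j ∨ N < j - i) → J i j = 0)
    (q qbar : ℕ → ℝ) (x y : ℝ)
    (hq : ∀ i, ∑ᶠ j, J i j * q j = y * q i)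
    (hqbar : ∀ j, ∑ᶠ i, qbar i * J i j = x * qbar j)
    (l : ℕ) :
    {ij : ℕ × ℕ | ij.1 < l ∧ l ≤ ij.2 ∧ qbar ij.1 * J ij.1 ij.2 * q ij.2 ≠ 0}.Finite ∧
    {ij : ℕ × ℕ | l ≤ ij.1 ∧ ij.2 < l ∧ qbar ij.1 * J ij.1 ij.2 * q ij.2 ≠ 0}.Finite ∧
    (y - x) * ∑ k ∈ Finset.range l, q k * qbar k =
      (∑ i ∈ Finset.range l, ∑ᶠ j ∈ Set.Ici l, qbar i * J i j * q j) -
      (∑ j ∈ Finset.range l, ∑ᶠ i ∈ Set.Ici l, qbar i * J i j * q j) := by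
  have ha := (isBanded_of_forall_lt_sub hband).mul_mul qbar q
  refine ⟨(ha.finite_setOf_fst_lt l).subset fun _ h => ⟨h.1, h.2.2⟩,
    (ha.finite_setOf_snd_lt l).subset fun _ h => ⟨h.2.1, h.2.2⟩, ?_⟩
  have hrow (i : ℕ) : ∑ᶠ j, qbar i * J i j * q j = qbar i * (y * q i) := by
    simp only [mul_assoc, ← mul_finsum, hq]
  have hcol (j : ℕ) : ∑ᶠ i, qbar i * J i j * q j = x * qbar j * q j := by
    rw [← finsum_mul, hqbar]
  rw [← ha.sum_finsum_sub_sum_finsum l]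
  simp only [hrow, hcol, mul_sum, ← sum_sub_distrib]
  exact sum_congr rfl fun k _ => by ring
end

section
/- Let μ be a finite positive Borel measure on ℝ, n₁, n₂ compositions of lengths p₁, p₂, and w_{1,a}, w_{2,b} measurable weights with x ↦ x^m w_{1,a}(x)w_{2,b}(x) μ-integrable for all m, a, b. Let g be the moment matrix g_{i,j} = ∫ ξ₁^{(i)} ξ₂^{(j)} dμ, and let S, S' be mutually inverse lower unitriangular matrices and S̄, S̄' mutually inverse upper triangular matrices with Sg = S̄ entrywise. Set Q^{(i)}(y) = Σ_{m≤i} S_{i,m} ξ₁^{(m)}(y), Q̄^{(j)}(x) = Σ_{m≤j} S̄'_{m,j} ξ₂^{(m)}(x), K^{[l]}(x,y) = Σ_{k=0}^{l−1} Q^{(k)}(y)Q̄^{(k)}(x), and J_{l,m} = Σ_{i≤l} S_{l,i} S'_{σ₁(i),m}. Writing r_α(m) for the unique element of {1,…,p_α} congruent to m mod p_α, and m_{{+,a}}, m_{{−,a}} for the smallest integer ≥ m, resp. largest integer ≤ m, of type a (w.r.t. n₁ for r₁-indices and n₂ for r₂-indices), define σ₁[l] = {l,…,(l)_{{+,r₁(a₁(l)−1)}}}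 × {(l−1)_{{−,r₁(a₁(l−1)+1)}},…,l−1} and σ₂[l] = {(l−1)_{{−,r₂(a₂(l−1)+1)}},…,l−1} × {l,…,(l)_{{+,r₂(a₂(l)−1)}}}. Then for every l ≥ max(|n₁|,|n₂|) and all x, y ∈ ℝ: (y−x)·K^{[l]}(x,y) = Σ_{(i,j)∈σ₁[l]} Q̄^{(j)}(x) J_{j,i} Q^{(i)}(y) − Σ_{(i,j)∈σ₂[l]} Q̄^{(j)}(x) J_{j,i} Q^{(i)}(y). -/
/-!
Both recursions are instances of one computation: if `w = A v` with `A` lower triangular and a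
lower triangular left inverse `B`, and `z v_t = v_{σ t}`, then `z w = (A Υ_σ B) w`. For `Q = S ξ₁`
this gives `y Q = J Q` with `J = S Υ₁ S⁻¹`. Multiplying `x ξ₁^{(i)} = ξ₁^{(σ₁ i)}` against
`ξ₂^{(j)}` gives `Υ₁ g = g Υ₂ᵀ`, and with `g S̄⁻¹ = S⁻¹` this turns `J` into `S̄ Υ₂ᵀ S̄⁻¹`, whence
`Q̄ᵀ J = x Q̄ᵀ` by the same computation applied to the transposes.

Substituting both recursions into `(y - x) K^{[l]}`, the two contributions of the leading
`l × l` block of `J` cancel, leaving the entries `J_{k,m}` and `J_{m,k}` with `k < l ≤ m`.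
Triangularity makes `J_{k,m} = 0` unless `m ≤ σ₁(t)` for some `t ≤ k`, resp. `J_{m,k} = 0` unless
`m ≤ σ₂(t)` for some `t ≤ k`. Since the type sequence `a(l)` runs through the types cyclically,
in blocks, every type occurs between `l` and the next occurrence of type `a(l) - 1`, and between
the last occurrence of type `a(l - 1) + 1` before `l` and `l - 1`; this bounds the surviving
entries to the two rectangles.
-/

open Finset MeasureTheory

theorem Nat.mul_add_le_mul_add_iff {M k₁ k₂ r₁ r₂ : ℕ} (h₁ : r₁ < M) (h₂ : r₂ < M) :
    k₁ * M + r₁ ≤ k₂ * M + r₂ ↔ k₁ < k₂ ∨ k₁ = k₂ ∧ r₁ ≤ r₂ := by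
  constructor
  · intro h
    rcases lt_trichotomy k₁ k₂ with hk | rfl | hk
    · exact Or.inl hk
    · exact Or.inr ⟨rfl, by omega⟩
    · nlinarith
  · rintro (hk | ⟨rfl, hr⟩)
    · nlinarith
    · omega

theorem Nat.mul_add_inj {M k₁ k₂ r₁ r₂ : ℕ} (h₁ : r₁ < M) (h₂ : r₂ < M)
    (h : k₁ * M + r₁ = k₂ * M + r₂) : k₁ = k₂ ∧ r₁ = r₂ := by
  have := (Nat.mul_add_le_mul_add_iff h₁ h₂).mp h.le
  have := (Nat.mul_add_le_mul_add_iff h₂ h₁).mp h.ge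
  omega

theorem Fin.val_add_one_eq_mod {p : ℕ} [NeZero p] (b : Fin p) :
    (b + 1).val = (b.val + 1) % p := by
  rw [Fin.val_add, Fin.val_one', Nat.add_mod_mod]

open Fin.CommRing in
theorem Fin.exists_mem_Icc_eq_of_forall_step {p : ℕ} [NeZero p] {τ : ℕ → Fin p}
    (hτ : ∀ k, τ (k + 1) = τ k ∨ τ (k + 1) = τ k + 1) {i j : ℕ} (hij : i ≤ j)
    (hwrap : τ j + 1 = τ i) (b : Fin p) : ∃ k ∈ Icc i j, τ k = b := by
  -- `c` counts the steps `+ 1`; wrapping around forces `c ≥ p - 1`.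
  have hcover : ∀ j, i ≤ j → ∃ c : ℕ, τ j = τ i + c ∧ ∀ d ≤ c, ∃ k ∈ Icc i j, τ k = τ i + d := by
    intro j hij
    induction j, hij using Nat.le_induction with
    | base => exact ⟨0, by simp, fun d hd => ⟨i, by simp, by simp [Nat.le_zero.mp hd]⟩⟩
    | succ j hij ih =>
      obtain ⟨c, hc, hcov⟩ := ih
      have hmono : Icc i j ⊆ Icc i (j + 1) := Icc_subset_Icc_right (by omega)
      rcases hτ j with h | h
      · exact ⟨c, h ▸ hc, fun d hd => (hcov d hd).imp fun k hk => ⟨hmono hk.1, hk.2⟩⟩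
      · refine ⟨c + 1, by rw [h, hc]; push_cast; ring, fun d hd => ?_⟩
        rcases Nat.lt_or_ge d (c + 1) with hd' | hd'
        · exact (hcov d (by omega)).imp fun k hk => ⟨hmono hk.1, hk.2⟩
        · refine ⟨j + 1, mem_Icc.mpr ⟨by omega, le_rfl⟩, ?_⟩
          rw [h, hc, show d = c + 1 by omega]
          push_cast
          ring
  obtain ⟨c, hc, hcov⟩ := hcover j hij
  have hp : p ∣ c + 1 := by
    rw [← Fin.natCast_eq_zero]
    push_cast
    linear_combination hwrap - hc
  have := Nat.le_of_dvd (by omega) hp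
  obtain ⟨k, hk, hkb⟩ := hcov (b - τ i).val (by have := (b - τ i).isLt; omega)
  exact ⟨k, hk, by rw [hkb, Fin.cast_val_eq_self]; ring⟩

theorem sum_range_eq_sum_range_of_eq_zero {M : Type*} [AddCommMonoid M] {f : ℕ → M} {m n : ℕ}
    (hmn : m ≤ n) (hf : ∀ k, m ≤ k → k < n → f k = 0) :
    ∑ k ∈ range m, f k = ∑ k ∈ range n, f k :=
  Finset.sum_subset (range_subset_range.mpr hmn) fun k hk hkm =>
    hf k (by simpa using hkm) (by simpa using hk)

theorem sum_range_eq_sum_Icc_of_eq_zero {M : Type*} [AddCommMonoid M] {f : ℕ → M} {c l : ℕ}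
    (hc : c < l) (hf : ∀ k < c, f k = 0) : ∑ k ∈ range l, f k = ∑ k ∈ Icc c (l - 1), f k := by
  rw [← sum_range_add_sum_Ico f hc.le, sum_eq_zero fun k hk => hf k (mem_range.mp hk), zero_add]
  congr 1
  ext k
  simp only [mem_Ico, mem_Icc]
  omega

section TriangularSums

variable {R : Type*} [CommSemiring R]

theorem sum_range_succ_mul_eq_ite {A B : ℕ → ℕ → R} (hB : ∀ i j, j < i → B i j = 0)
    (hAB : ∀ i j, ∑ k ∈ range (max i j + 1), A i k * B k j = if i = j then 1 else 0)
    (i j : ℕ) : ∑ k ∈ range (j + 1), A i k * B k j = if i = j then 1 else 0 := by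
  rw [← hAB, sum_range_eq_sum_range_of_eq_zero (n := max i j + 1) (by omega)]
  intro k hk _
  rw [hB k j (by omega), mul_zero]

theorem eq_sum_of_leftInverse {A B : ℕ → ℕ → R} (hA : ∀ i j, i < j → A i j = 0)
    (hBA : ∀ i j, ∑ k ∈ range (max i j + 1), B i k * A k j = if i = j then 1 else 0)
    {v w : ℕ → R} (hw : ∀ i, w i = ∑ m ∈ range (i + 1), A i m * v m) (t : ℕ) :
    v t = ∑ j ∈ range (t + 1), B t j * w j := by
  have hw' : ∀ j ∈ range (t + 1), B t j * w j = ∑ m ∈ range (t + 1), B t j * A j m * v m := by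
    intro j hj
    rw [hw, mul_sum,
      sum_range_eq_sum_range_of_eq_zero (n := t + 1) (Nat.succ_le_of_lt (mem_range.mp hj))]
    · exact sum_congr rfl fun m _ => by ring
    · intro m hm _
      rw [hA j m (by omega), zero_mul, mul_zero]
  rw [sum_congr rfl hw', sum_comm]
  have hδ : ∀ m ∈ range (t + 1), ∑ j ∈ range (t + 1), B t j * A j m * v m =
      if t = m then v m else 0 := by
    intro m hm
    have hδ := hBA t m
    rw [max_eq_left (Nat.lt_succ_iff.mp (mem_range.mp hm))] at hδ
    rw [← sum_mul, hδ, ite_mul, one_mul, zero_mul]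
  rw [sum_congr rfl hδ, sum_ite_eq]
  simp

theorem sum_mul_eq_of_factor {g S' Sbar Sbar' : ℕ → ℕ → R}
    (hS' : ∀ i j, i < j → S' i j = 0) (hSbar' : ∀ i j, j < i → Sbar' i j = 0)
    (hinv : ∀ i j, ∑ k ∈ range (max i j + 1), Sbar i k * Sbar' k j = if i = j then 1 else 0)
    (hg : ∀ i j, g i j = ∑ k ∈ range (i + 1), S' i k * Sbar k j) (i j : ℕ) :
    ∑ m ∈ range (j + 1), g i m * Sbar' m j = S' i j := by
  simp_rw [hg, sum_mul, mul_assoc]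
  rw [sum_comm]
  simp_rw [← mul_sum, sum_range_succ_mul_eq_ite hSbar' hinv, mul_ite, mul_one, mul_zero,
    sum_ite_eq', mem_range]
  split_ifs with h
  · rfl
  · exact (hS' i j (by omega)).symm

theorem sum_mul_shift_eq_sum_mul_shift {g S S' Sbar Sbar' : ℕ → ℕ → R} {σ₁ σ₂ : ℕ → ℕ}
    (hSg : ∀ i j, ∑ k ∈ range (i + 1), S i k * g k j = Sbar i j)
    (hgS : ∀ i j, ∑ k ∈ range (j + 1), g i k * Sbar' k j = S' i j)
    (hg : ∀ i j, g (σ₁ i) j = g i (σ₂ j)) (i j : ℕ) :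
    ∑ k ∈ range (i + 1), S i k * S' (σ₁ k) j =
      ∑ k ∈ range (j + 1), Sbar' k j * Sbar i (σ₂ k) := by
  simp_rw [← hgS, hg, mul_sum]
  rw [sum_comm]
  refine sum_congr rfl fun k _ => ?_
  rw [← hSg, mul_sum]
  exact sum_congr rfl fun _ _ => by ring

theorem mul_eq_sum_of_shift {A B : ℕ → ℕ → R} (hB : ∀ i j, i < j → B i j = 0) {σ : ℕ → ℕ}
    {v w : ℕ → R} (hw : ∀ i, w i = ∑ m ∈ range (i + 1), A i m * v m)
    (hv : ∀ i, v i = ∑ m ∈ range (i + 1), B i m * w m) {z : R} (hz : ∀ t, z * v t = v (σ t))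
    {k M : ℕ} (hM : ∀ t ≤ k, σ t ≤ M) :
    z * w k = ∑ m ∈ range (M + 1), (∑ i ∈ range (k + 1), A k i * B (σ i) m) * w m := by
  have hv' : ∀ i ∈ range (k + 1), z * (A k i * v i) =
      ∑ m ∈ range (M + 1), A k i * B (σ i) m * w m := by
    intro i hi
    rw [mul_left_comm, hz, hv, mul_sum, sum_range_eq_sum_range_of_eq_zero (n := M + 1)
      (Nat.succ_le_succ (hM i (Nat.lt_succ_iff.mp (mem_range.mp hi))))]
    · exact sum_congr rfl fun m _ => by ring
    · intro m hm _
      rw [hB (σ i) m (by omega), zero_mul, mul_zero]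
  simp_rw [hw k, mul_sum, sum_congr rfl hv', sum_mul]
  exact sum_comm

theorem sum_mul_shift_eq_zero {A B : ℕ → ℕ → R} (hB : ∀ i j, i < j → B i j = 0) {σ : ℕ → ℕ}
    {k m : ℕ} (h : ∀ i ≤ k, σ i < m) : ∑ i ∈ range (k + 1), A k i * B (σ i) m = 0 :=
  sum_eq_zero fun i hi => by rw [hB _ _ (h i (Nat.lt_succ_iff.mp (mem_range.mp hi))), mul_zero]

end TriangularSums

section ChristoffelDarboux

variable {R : Type*} [CommRing R]

theorem sub_mul_sum_eq_sum_sub_sum (J : ℕ → ℕ → R) {q qb : ℕ → R} {x y : R} {l M₁ M₂ : ℕ}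
    (h₁ : l ≤ M₁ + 1) (h₂ : l ≤ M₂ + 1)
    (hq : ∀ k < l, y * q k = ∑ m ∈ range (M₁ + 1), J k m * q m)
    (hqb : ∀ k < l, x * qb k = ∑ m ∈ range (M₂ + 1), J m k * qb m) :
    (y - x) * ∑ k ∈ range l, q k * qb k =
      ∑ k ∈ range l, ∑ m ∈ Icc l M₁, qb k * J k m * q m -
        ∑ k ∈ range l, ∑ m ∈ Icc l M₂, qb m * J m k * q k := by
  have hsplit : ∀ (M : ℕ) (f : ℕ → R), l ≤ M + 1 →
      ∑ m ∈ range (M + 1), f m = ∑ m ∈ range l, f m + ∑ m ∈ Icc l M, f m := fun M f h => by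
    rw [← sum_range_add_sum_Ico f h, Ico_add_one_right_eq_Icc]
  have hterm : ∀ k ∈ range l, (y - x) * (q k * qb k) =
      (∑ m ∈ range l, qb k * J k m * q m + ∑ m ∈ Icc l M₁, qb k * J k m * q m) -
        (∑ m ∈ range l, qb m * J m k * q k + ∑ m ∈ Icc l M₂, qb m * J m k * q k) := by
    intro k hk
    have hk := mem_range.mp hk
    rw [← hsplit M₁ _ h₁, ← hsplit M₂ _ h₂]
    calc (y - x) * (q k * qb k) = qb k * (y * q k) - q k * (x * qb k) := by ring
      _ = _ := by
        rw [hq k hk, hqb k hk, mul_sum, mul_sum]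
        congr 1 <;> exact sum_congr rfl fun _ _ => by ring
  rw [mul_sum, sum_congr rfl hterm, sum_sub_distrib, sum_add_distrib, sum_add_distrib,
    sum_comm (s := range l) (t := range l) (f := fun k m => qb m * J m k * q k)]
  ring

theorem sub_mul_sum_eq_of_band (J : ℕ → ℕ → R) {q qb : ℕ → R} {x y : R} {l c₁ c₂ M₁ M₂ : ℕ}
    (hc₁ : c₁ < l) (hc₂ : c₂ < l) (h₁ : l ≤ M₁ + 1) (h₂ : l ≤ M₂ + 1)
    (hq : ∀ k < l, y * q k = ∑ m ∈ range (M₁ + 1), J k m * q m)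
    (hqb : ∀ k < l, x * qb k = ∑ m ∈ range (M₂ + 1), J m k * qb m)
    (hJ₁ : ∀ k < c₁, ∀ m, l ≤ m → J k m = 0) (hJ₂ : ∀ k < c₂, ∀ m, l ≤ m → J m k = 0) :
    (y - x) * ∑ k ∈ range l, q k * qb k =
      (∑ ij ∈ Icc l M₁ ×ˢ Icc c₁ (l - 1), qb ij.2 * J ij.2 ij.1 * q ij.1) -
        ∑ ij ∈ Icc c₂ (l - 1) ×ˢ Icc l M₂, qb ij.2 * J ij.2 ij.1 * q ij.1 := by
  rw [sub_mul_sum_eq_sum_sub_sum J h₁ h₂ hq hqb, sum_product, sum_product]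
  congr 1
  · rw [sum_range_eq_sum_Icc_of_eq_zero hc₁ fun k hk => sum_eq_zero fun m hm => by
      rw [hJ₁ k hk m (mem_Icc.mp hm).1, mul_zero, zero_mul], sum_comm]
  · rw [sum_range_eq_sum_Icc_of_eq_zero hc₂ fun k hk => sum_eq_zero fun m hm => by
      rw [hJ₂ k hk m (mem_Icc.mp hm).1, mul_zero, zero_mul]]

end ChristoffelDarboux

/-- The decomposition `l = k(l)|n| + n_1 + ⋯ + n_{a(l)-1} + r(l)` of indices by a composition `n`
with `p` parts. -/
structure TypeIndexing (p : ℕ) where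
  n : Fin p → ℕ
  n_pos : ∀ b, 1 ≤ n b
  k : ℕ → ℕ
  a : ℕ → Fin p
  r : ℕ → ℕ
  decomp : ∀ l, r l < n (a l) ∧
    l = k l * (∑ b, n b) + (∑ i ∈ univ.filter (fun i => i < a l), n i) + r l

namespace TypeIndexing

variable {p : ℕ} (D : TypeIndexing p)

def size : ℕ := ∑ b, D.n b

def offset (b : Fin p) : ℕ := ∑ i ∈ univ.filter (fun i => i < b), D.n i

/-- The exponent of `x` in `ξ^{(l)}(x) = w_{a(l)}(x) x^{k(l) n_{a(l)} + r(l)}`. -/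
def deg (l : ℕ) : ℕ := D.k l * D.n (D.a l) + D.r l

theorem r_lt (l : ℕ) : D.r l < D.n (D.a l) := (D.decomp l).1

theorem eq_k_mul_size_add (l : ℕ) : l = D.k l * D.size + D.offset (D.a l) + D.r l :=
  (D.decomp l).2

theorem offset_add_n (b : Fin p) :
    D.offset b + D.n b = ∑ i ∈ univ.filter (fun i => i ≤ b), D.n i := by
  have : univ.filter (fun i => i ≤ b) = insert b (univ.filter (fun i => i < b)) := by
    ext i; simp [le_iff_lt_or_eq, or_comm]
  rw [this, sum_insert (by simp), add_comm, offset]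

theorem offset_add_n_le_offset {b c : Fin p} (h : b < c) : D.offset b + D.n b ≤ D.offset c := by
  rw [offset_add_n]
  refine Finset.sum_le_sum_of_subset ?_
  intro i
  simpa using fun hi => hi.trans_lt h

theorem offset_add_n_le_size (b : Fin p) : D.offset b + D.n b ≤ D.size := by
  rw [offset_add_n]
  exact Finset.sum_le_sum_of_subset (filter_subset _ _)

theorem size_pos [NeZero p] : 0 < D.size := by
  have := D.offset_add_n_le_size 0
  have := D.n_pos 0
  omega

theorem offset_zero [NeZero p] : D.offset 0 = 0 := by
  simp [offset]

theorem offset_add_one [NeZero p] {b : Fin p} (hb : b.val + 1 < p) :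
    D.offset (b + 1) = D.offset b + D.n b := by
  have : univ.filter (fun i => i < b + 1) = univ.filter (fun i => i ≤ b) := by
    refine Finset.ext fun i => ?_
    simp only [mem_filter, mem_univ, true_and, Fin.lt_def, Fin.le_def, Fin.val_add_one_eq_mod,
      Nat.mod_eq_of_lt hb]
    omega
  rw [offset_add_n, offset, this]

theorem offset_add_n_eq_size {b : Fin p} (hb : b.val + 1 = p) : D.offset b + D.n b = D.size := by
  have : univ.filter (fun i => i ≤ b) = univ := by
    ext i
    simp only [mem_filter, mem_univ, true_and, iff_true, Fin.le_def]
    omega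
  rw [offset_add_n, size, this]

theorem eq_of_offset_add_eq {b c : Fin p} {r₁ r₂ : ℕ} (h₁ : r₁ < D.n b) (h₂ : r₂ < D.n c)
    (h : D.offset b + r₁ = D.offset c + r₂) : b = c := by
  rcases lt_trichotomy b c with hbc | hbc | hbc
  · have := D.offset_add_n_le_offset hbc; omega
  · exact hbc
  · have := D.offset_add_n_le_offset hbc; omega

theorem decomp_unique {k : ℕ} {b : Fin p} {r : ℕ} (hr : r < D.n b) :
    D.a (k * D.size + D.offset b + r) = b ∧ D.k (k * D.size + D.offset b + r) = k ∧
      D.r (k * D.size + D.offset b + r) = r := by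
  set l := k * D.size + D.offset b + r
  have hl := D.eq_k_mul_size_add l
  have hlt := D.r_lt l
  have := D.offset_add_n_le_size b
  have := D.offset_add_n_le_size (D.a l)
  obtain ⟨hk, hs⟩ := Nat.mul_add_inj (M := D.size) (k₁ := D.k l) (k₂ := k)
    (r₁ := D.offset (D.a l) + D.r l) (r₂ := D.offset b + r) (by omega) (by omega) (by omega)
  have hb := D.eq_of_offset_add_eq hlt hr hs
  refine ⟨hb, hk, ?_⟩
  rw [hb] at hs
  omega

theorem le_iff_deg_le {i j : ℕ} (h : D.a i = D.a j) : i ≤ j ↔ D.deg i ≤ D.deg j := by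
  have hi := D.eq_k_mul_size_add i
  have hj := D.eq_k_mul_size_add j
  have hri := D.r_lt i
  have hrj := D.r_lt j
  have := D.offset_add_n_le_size (D.a j)
  rw [h] at hi hri
  rw [deg, deg, h, Nat.mul_add_le_mul_add_iff hri hrj,
    ← Nat.mul_add_le_mul_add_iff (M := D.size) (by omega) (by omega)]
  omega

theorem a_add_one [NeZero p] (i : ℕ) : D.a (i + 1) = D.a i ∨ D.a (i + 1) = D.a i + 1 := by
  have hi := D.eq_k_mul_size_add i
  have hri := D.r_lt i
  rcases Nat.lt_or_ge (D.r i + 1) (D.n (D.a i)) with hr | hr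
  · left
    have := (D.decomp_unique (k := D.k i) hr).1
    rwa [← add_assoc, ← hi] at this
  right
  rcases Nat.lt_or_ge ((D.a i).val + 1) p with hb | hb
  · have := (D.decomp_unique (k := D.k i) (r := 0) (D.n_pos (D.a i + 1))).1
    rwa [D.offset_add_one hb, add_zero,
      show D.k i * D.size + (D.offset (D.a i) + D.n (D.a i)) = i + 1 by omega] at this
  · have hb : (D.a i).val + 1 = p := by have := (D.a i).isLt; omega
    have h0 : D.a i + 1 = 0 := Fin.ext (by rw [Fin.val_add_one_eq_mod, hb, Nat.mod_self]; rfl)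
    have := D.offset_add_n_eq_size hb
    have := (D.decomp_unique (k := D.k i + 1) (r := 0) (D.n_pos 0)).1
    rw [h0]
    rwa [D.offset_zero, show (D.k i + 1) * D.size + 0 + 0 = i + 1 by rw [add_mul]; omega] at this

theorem exists_le_a_eq {l : ℕ} (hl : D.size ≤ l + 1) (b : Fin p) : ∃ i ≤ l, D.a i = b := by
  refine ⟨D.offset b, ?_, ?_⟩
  · have := D.offset_add_n_le_size b
    have := D.n_pos b
    omega
  · simpa using (D.decomp_unique (k := 0) (r := 0) (D.n_pos b)).1

theorem exists_deg_eq_add_one (t : ℕ) : ∃ u, D.a u = D.a t ∧ D.deg u = D.deg t + 1 := by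
  rcases Nat.lt_or_ge (D.r t + 1) (D.n (D.a t)) with hr | hr
  · obtain ⟨ha, hk, hr'⟩ := D.decomp_unique (k := D.k t) hr
    exact ⟨_, ha, by rw [deg, deg, ha, hk, hr']; ring⟩
  · have := D.r_lt t
    obtain ⟨ha, hk, hr'⟩ := D.decomp_unique (k := D.k t + 1) (r := 0) (D.n_pos (D.a t))
    exact ⟨_, ha, by rw [deg, deg, ha, hk, hr', add_mul]; omega⟩

def IsNextOccurrence (lp : ℕ → Fin p → ℕ) : Prop :=
  ∀ m b, m ≤ lp m b ∧ D.a (lp m b) = b ∧ ∀ i, m ≤ i → D.a i = b → lp m b ≤ i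

def IsLastOccurrence (lm : ℕ → Fin p → ℕ) : Prop :=
  ∀ m b, (∃ i ≤ m, D.a i = b) →
    lm m b ≤ m ∧ D.a (lm m b) = b ∧ ∀ i ≤ m, D.a i = b → i ≤ lm m b

variable {D} {lp lm : ℕ → Fin p → ℕ}

theorem deg_lp_succ (hlp : D.IsNextOccurrence lp) (t : ℕ) :
    D.deg (lp (t + 1) (D.a t)) = D.deg t + 1 := by
  obtain ⟨hge, ha, hmin⟩ := hlp (t + 1) (D.a t)
  obtain ⟨u, hua, hu⟩ := D.exists_deg_eq_add_one t
  have htu : t + 1 ≤ u := by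
    by_contra h
    have := (D.le_iff_deg_le hua).mp (by omega)
    omega
  have := (D.le_iff_deg_le (ha.trans hua.symm)).mp (hmin u htu hua)
  have := (D.le_iff_deg_le ha).not.mp (by omega)
  omega

theorem mul_eq_apply_lp_succ {R : Type*} [CommMonoid R] (hlp : D.IsNextOccurrence lp)
    (w : Fin p → R → R) {ξ : ℕ → R → R} (hξ : ∀ i x, ξ i x = w (D.a i) x * x ^ D.deg i)
    (t : ℕ) (x : R) : x * ξ t x = ξ (lp (t + 1) (D.a t)) x := by
  rw [hξ, hξ, (hlp _ _).2.1, deg_lp_succ hlp, mul_left_comm, pow_succ']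

variable [NeZero p]

theorem lp_le_lp_sub_one (hlp : D.IsNextOccurrence lp) (l : ℕ) (b : Fin p) :
    lp l b ≤ lp l (D.a l - 1) := by
  obtain ⟨hge, ha, -⟩ := hlp l (D.a l - 1)
  obtain ⟨k, hk, hkb⟩ :=
    Fin.exists_mem_Icc_eq_of_forall_step D.a_add_one hge (by rw [ha, sub_add_cancel]) b
  rw [mem_Icc] at hk
  exact ((hlp l b).2.2 k hk.1 hkb).trans hk.2

theorem lm_add_one_le_lm (hlm : D.IsLastOccurrence lm) {l : ℕ}
    (hex : ∃ i ≤ l, D.a i = D.a l + 1) (b : Fin p) : lm l (D.a l + 1) ≤ lm l b := by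
  obtain ⟨hle, ha, -⟩ := hlm l _ hex
  obtain ⟨k, hk, hkb⟩ := Fin.exists_mem_Icc_eq_of_forall_step D.a_add_one hle ha.symm b
  rw [mem_Icc] at hk
  exact hk.1.trans ((hlm l b ⟨k, hk.2, hkb⟩).2.2 k hk.2 hkb)

theorem lp_succ_le_lp_sub_one (hlp : D.IsNextOccurrence lp) {t l : ℕ} (h : t < l) :
    lp (t + 1) (D.a t) ≤ lp l (D.a l - 1) :=
  ((hlp _ _).2.2 _ (by have := (hlp l (D.a t)).1; omega) (hlp l (D.a t)).2.1).trans
    (lp_le_lp_sub_one hlp l _)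

theorem lm_add_one_le (hlm : D.IsLastOccurrence lm) {l : ℕ} (hl : D.size ≤ l + 1) :
    lm l (D.a l + 1) ≤ l :=
  (hlm l _ (D.exists_le_a_eq hl _)).1

theorem lp_succ_le_of_lt_lm (hlp : D.IsNextOccurrence lp) (hlm : D.IsLastOccurrence lm) {t l : ℕ}
    (hl : D.size ≤ l + 1) (h : t < lm l (D.a l + 1)) : lp (t + 1) (D.a t) ≤ l := by
  have hu := lm_add_one_le_lm hlm (D.exists_le_a_eq hl _) (D.a t)
  obtain ⟨hle, ha, -⟩ := hlm l (D.a t) ⟨t, by have := lm_add_one_le hlm hl; omega, rfl⟩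
  exact ((hlp _ _).2.2 _ (by omega) ha).trans hle

theorem lm_pred_lt (hlm : D.IsLastOccurrence lm) {l : ℕ} (hl : D.size ≤ l) :
    lm (l - 1) (D.a (l - 1) + 1) < l := by
  have := D.size_pos
  have := lm_add_one_le hlm (l := l - 1) (by omega)
  omega

section Jacobi

variable {R : Type*} [CommSemiring R] {A B J : ℕ → ℕ → R}

theorem mul_eq_sum_range_lp_sub_one (hlp : D.IsNextOccurrence lp) (hA : ∀ i j, i < j → A i j = 0)
    (hB : ∀ i j, i < j → B i j = 0)
    (hBA : ∀ i j, ∑ k ∈ range (max i j + 1), B i k * A k j = if i = j then 1 else 0)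
    (hJ : ∀ k m, J k m = ∑ i ∈ range (k + 1), A k i * B (lp (i + 1) (D.a i)) m)
    {v w : ℕ → R} (hw : ∀ i, w i = ∑ m ∈ range (i + 1), A i m * v m) {z : R}
    (hz : ∀ t, z * v t = v (lp (t + 1) (D.a t))) {k l : ℕ} (hk : k < l) :
    z * w k = ∑ m ∈ range (lp l (D.a l - 1) + 1), J k m * w m := by
  simp_rw [hJ]
  exact mul_eq_sum_of_shift hB hw (eq_sum_of_leftInverse hA hBA hw) hz
    fun t ht => lp_succ_le_lp_sub_one hlp (by omega)

theorem eq_zero_of_lt_lm (hlp : D.IsNextOccurrence lp) (hlm : D.IsLastOccurrence lm)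
    (hB : ∀ i j, i < j → B i j = 0)
    (hJ : ∀ k m, J k m = ∑ i ∈ range (k + 1), A k i * B (lp (i + 1) (D.a i)) m) {k l m : ℕ}
    (hl : D.size ≤ l) (hk : k < lm (l - 1) (D.a (l - 1) + 1)) (hm : l ≤ m) : J k m = 0 := by
  have := D.size_pos
  rw [hJ]
  refine sum_mul_shift_eq_zero hB fun i hi => ?_
  have := lp_succ_le_of_lt_lm hlp hlm (l := l - 1) (by omega)
    (show i < lm (l - 1) (D.a (l - 1) + 1) by omega)
  omega

end Jacobi

end TypeIndexing

/-- Types live in `Fin p`, so `aa₁ l - 1` and `aa₁ (l - 1) + 1` are computed cyclically: they are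
the paper's `r₁(a₁(l) − 1)` and `r₁(a₁(l − 1) + 1)`, and likewise for the second family. -/
theorem stmt_17_general
    (μ : Measure ℝ)
    (p₁ p₂ : ℕ)
    (n₁ : Fin p₁ → ℕ) (hn₁ : ∀ a, 1 ≤ n₁ a)
    (n₂ : Fin p₂ → ℕ) (hn₂ : ∀ b, 1 ≤ n₂ b)
    (w₁ : Fin p₁ → ℝ → ℝ) (w₂ : Fin p₂ → ℝ → ℝ)
    (kk₁ : ℕ → ℕ) (aa₁ : ℕ → Fin p₁) (rr₁ : ℕ → ℕ)
    (hdec₁ : ∀ l, rr₁ l < n₁ (aa₁ l) ∧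
      l = kk₁ l * (∑ b, n₁ b) +
          (∑ i ∈ Finset.univ.filter (fun i => i < aa₁ l), n₁ i) + rr₁ l)
    (kk₂ : ℕ → ℕ) (aa₂ : ℕ → Fin p₂) (rr₂ : ℕ → ℕ)
    (hdec₂ : ∀ l, rr₂ l < n₂ (aa₂ l) ∧
      l = kk₂ l * (∑ b, n₂ b) +
          (∑ i ∈ Finset.univ.filter (fun i => i < aa₂ l), n₂ i) + rr₂ l)
    (ξ₁ : ℕ → ℝ → ℝ)
    (hξ₁ : ∀ i x, ξ₁ i x = w₁ (aa₁ i) x * x ^ (kk₁ i * n₁ (aa₁ i) + rr₁ i))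
    (ξ₂ : ℕ → ℝ → ℝ)
    (hξ₂ : ∀ j x, ξ₂ j x = w₂ (aa₂ j) x * x ^ (kk₂ j * n₂ (aa₂ j) + rr₂ j))
    (g : ℕ → ℕ → ℝ)
    (hg : ∀ i j, g i j = ∫ x, ξ₁ i x * ξ₂ j x ∂μ)
    [NeZero p₁] [NeZero p₂]
    (lp₁ : ℕ → Fin p₁ → ℕ)
    (hlp₁ : ∀ m a, m ≤ lp₁ m a ∧ aa₁ (lp₁ m a) = a ∧
      ∀ i, m ≤ i → aa₁ i = a → lp₁ m a ≤ i)
    (lm₁ : ℕ → Fin p₁ → ℕ)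
    (hlm₁ : ∀ m a, (∃ i ≤ m, aa₁ i = a) →
      lm₁ m a ≤ m ∧ aa₁ (lm₁ m a) = a ∧ ∀ i ≤ m, aa₁ i = a → i ≤ lm₁ m a)
    (lp₂ : ℕ → Fin p₂ → ℕ)
    (hlp₂ : ∀ m a, m ≤ lp₂ m a ∧ aa₂ (lp₂ m a) = a ∧
      ∀ i, m ≤ i → aa₂ i = a → lp₂ m a ≤ i)
    (lm₂ : ℕ → Fin p₂ → ℕ)
    (hlm₂ : ∀ m a, (∃ i ≤ m, aa₂ i = a) →
      lm₂ m a ≤ m ∧ aa₂ (lm₂ m a) = a ∧ ∀ i ≤ m, aa₂ i = a → i ≤ lm₂ m a)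
    (S S' : ℕ → ℕ → ℝ)
    (hS_tri : ∀ i j, i < j → S i j = 0)
    (hS'_tri : ∀ i j, i < j → S' i j = 0)
    (hinv₂ : ∀ l m, ∑ k ∈ Finset.range (max l m + 1), S' l k * S k m =
      if l = m then 1 else 0)
    (Sbar Sbar' : ℕ → ℕ → ℝ)
    (hSbar_tri : ∀ i j, j < i → Sbar i j = 0)
    (hSbar'_tri : ∀ i j, j < i → Sbar' i j = 0)
    (hinv₃ : ∀ l m, ∑ k ∈ Finset.range (max l m + 1), Sbar l k * Sbar' k m =
      if l = m then 1 else 0)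
    (hinv₄ : ∀ l m, ∑ k ∈ Finset.range (max l m + 1), Sbar' l k * Sbar k m =
      if l = m then 1 else 0)
    (hSg : ∀ l j, ∑ i ∈ Finset.range (l + 1), S l i * g i j = Sbar l j)
    (Q : ℕ → ℝ → ℝ)
    (hQ : ∀ i y, Q i y = ∑ m ∈ Finset.range (i + 1), S i m * ξ₁ m y)
    (Qbar : ℕ → ℝ → ℝ)
    (hQbar : ∀ j x, Qbar j x = ∑ m ∈ Finset.range (j + 1), Sbar' m j * ξ₂ m x)
    (K : ℕ → ℝ → ℝ → ℝ)
    (hK : ∀ l x y, K l x y = ∑ k ∈ Finset.range l, Q k y * Qbar k x)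
    (J : ℕ → ℕ → ℝ)
    (hJ : ∀ l m, J l m = ∑ i ∈ Finset.range (l + 1), S l i * S' (lp₁ (i + 1) (aa₁ i)) m)
    (l : ℕ) (hl : max (∑ a, n₁ a) (∑ b, n₂ b) ≤ l) (x y : ℝ) :
    (y - x) * K l x y =
      (∑ ij ∈ Finset.Icc l (lp₁ l (aa₁ l - 1)) ×ˢ
          Finset.Icc (lm₁ (l - 1) (aa₁ (l - 1) + 1)) (l - 1),
        Qbar ij.2 x * J ij.2 ij.1 * Q ij.1 y) -
      (∑ ij ∈ Finset.Icc (lm₂ (l - 1) (aa₂ (l - 1) + 1)) (l - 1) ×ˢ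
          Finset.Icc l (lp₂ l (aa₂ l - 1)),
        Qbar ij.2 x * J ij.2 ij.1 * Q ij.1 y) := by
  let D₁ : TypeIndexing p₁ := ⟨n₁, hn₁, kk₁, aa₁, rr₁, hdec₁⟩
  let D₂ : TypeIndexing p₂ := ⟨n₂, hn₂, kk₂, aa₂, rr₂, hdec₂⟩
  have hl₁ : D₁.size ≤ l := le_of_max_le_left hl
  have hl₂ : D₂.size ≤ l := le_of_max_le_right hl
  have hshift₁ := TypeIndexing.mul_eq_apply_lp_succ (D := D₁) hlp₁ w₁ hξ₁
  have hshift₂ := TypeIndexing.mul_eq_apply_lp_succ (D := D₂) hlp₂ w₂ hξ₂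
  have hgS : ∀ i j, ∑ m ∈ range (j + 1), g i m * Sbar' m j = S' i j :=
    sum_mul_eq_of_factor hS'_tri hSbar'_tri hinv₃ fun i j =>
      eq_sum_of_leftInverse hS_tri hinv₂ (v := (g · j)) (fun i => (hSg i j).symm) i
  -- `J = S̄ Υ₂ᵀ S̄⁻¹`, from `Υ₁ g = g Υ₂ᵀ`
  have hJ' : ∀ k m, J m k = ∑ i ∈ range (k + 1), Sbar' i k * Sbar m (lp₂ (i + 1) (aa₂ i)) := by
    refine fun k m => (hJ m k).trans (sum_mul_shift_eq_sum_mul_shift hSg hgS (fun i j => ?_) m k)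
    simp only [hg]
    congr 1 with z
    rw [← hshift₁, ← hshift₂]
    ring
  have hSbar_tri' : ∀ i j, i < j → Sbar j i = 0 := fun i j h => hSbar_tri j i h
  have hSbar'_tri' : ∀ i j, i < j → Sbar' j i = 0 := fun i j h => hSbar'_tri j i h
  have hinv₄' : ∀ i j, ∑ k ∈ range (max i j + 1), Sbar k i * Sbar' j k =
      if i = j then 1 else 0 := fun i j => by
    simpa [max_comm, mul_comm, eq_comm] using hinv₄ j i
  rw [hK]
  exact sub_mul_sum_eq_of_band J (TypeIndexing.lm_pred_lt (D := D₁) hlm₁ hl₁)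
    (TypeIndexing.lm_pred_lt (D := D₂) hlm₂ hl₂) (Nat.le_succ_of_le (hlp₁ l _).1)
    (Nat.le_succ_of_le (hlp₂ l _).1)
    (fun k hk => TypeIndexing.mul_eq_sum_range_lp_sub_one (D := D₁) hlp₁ hS_tri hS'_tri hinv₂ hJ
      (hQ · y) (hshift₁ · y) hk)
    (fun k hk => TypeIndexing.mul_eq_sum_range_lp_sub_one (D := D₂) (J := fun k m => J m k) hlp₂
      hSbar'_tri' hSbar_tri' hinv₄' hJ' (hQbar · x) (hshift₂ · x) hk)
    (fun k hk m hm => TypeIndexing.eq_zero_of_lt_lm (D := D₁) hlp₁ hlm₁ hS'_tri hJ hl₁ hk hm)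
    (fun k hk m hm => TypeIndexing.eq_zero_of_lt_lm (D := D₂) (J := fun k m => J m k) hlp₂ hlm₂
      hSbar_tri' hJ' hl₂ hk hm)

/-- The alternative Christoffel--Darboux formula for multiple orthogonal
polynomials of mixed type: for `l ≥ max(|n₁|,|n₂|)`,
`(y−x)·K^[l](x,y) = Σ_{(i,j)∈σ₁[l]} Q̄⁽ʲ⁾(x) J_{j,i} Q⁽ⁱ⁾(y)
                  − Σ_{(i,j)∈σ₂[l]} Q̄⁽ʲ⁾(x) J_{j,i} Q⁽ⁱ⁾(y)`.
Types are indexed by `Fin p` (cyclically, so `a ± 1` is mod `p`); `lp m a`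
(resp. `lm m a`) denotes the smallest integer `≥ m` (resp. largest `≤ m`)
of the given type. -/
theorem stmt_17
    (μ : Measure ℝ) [IsFiniteMeasure μ]
    (p₁ p₂ : ℕ) (hp₁ : 1 ≤ p₁) (hp₂ : 1 ≤ p₂)
    (n₁ : Fin p₁ → ℕ) (hn₁ : ∀ a, 1 ≤ n₁ a)
    (n₂ : Fin p₂ → ℕ) (hn₂ : ∀ b, 1 ≤ n₂ b)
    (w₁ : Fin p₁ → ℝ → ℝ) (w₂ : Fin p₂ → ℝ → ℝ)
    (hw₁ : ∀ a, Measurable (w₁ a)) (hw₂ : ∀ b, Measurable (w₂ b))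
    (hint : ∀ (m : ℕ) (a : Fin p₁) (b : Fin p₂),
      Integrable (fun x => x ^ m * w₁ a x * w₂ b x) μ)
    (kk₁ : ℕ → ℕ) (aa₁ : ℕ → Fin p₁) (rr₁ : ℕ → ℕ)
    (hdec₁ : ∀ l, rr₁ l < n₁ (aa₁ l) ∧
      l = kk₁ l * (∑ b, n₁ b) +
          (∑ i ∈ Finset.univ.filter (fun i => i < aa₁ l), n₁ i) + rr₁ l)
    (kk₂ : ℕ → ℕ) (aa₂ : ℕ → Fin p₂) (rr₂ : ℕ → ℕ)
    (hdec₂ : ∀ l, rr₂ l < n₂ (aa₂ l) ∧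
      l = kk₂ l * (∑ b, n₂ b) +
          (∑ i ∈ Finset.univ.filter (fun i => i < aa₂ l), n₂ i) + rr₂ l)
    (ξ₁ : ℕ → ℝ → ℝ)
    (hξ₁ : ∀ i x, ξ₁ i x = w₁ (aa₁ i) x * x ^ (kk₁ i * n₁ (aa₁ i) + rr₁ i))
    (ξ₂ : ℕ → ℝ → ℝ)
    (hξ₂ : ∀ j x, ξ₂ j x = w₂ (aa₂ j) x * x ^ (kk₂ j * n₂ (aa₂ j) + rr₂ j))
    (g : ℕ → ℕ → ℝ)
    (hg : ∀ i j, g i j = ∫ x, ξ₁ i x * ξ₂ j x ∂μ)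
    [NeZero p₁] [NeZero p₂]
    (lp₁ : ℕ → Fin p₁ → ℕ)
    (hlp₁ : ∀ m a, m ≤ lp₁ m a ∧ aa₁ (lp₁ m a) = a ∧
      ∀ i, m ≤ i → aa₁ i = a → lp₁ m a ≤ i)
    (lm₁ : ℕ → Fin p₁ → ℕ)
    (hlm₁ : ∀ m a, (∃ i ≤ m, aa₁ i = a) →
      lm₁ m a ≤ m ∧ aa₁ (lm₁ m a) = a ∧ ∀ i ≤ m, aa₁ i = a → i ≤ lm₁ m a)
    (lp₂ : ℕ → Fin p₂ → ℕ)
    (hlp₂ : ∀ m a, m ≤ lp₂ m a ∧ aa₂ (lp₂ m a) = a ∧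
      ∀ i, m ≤ i → aa₂ i = a → lp₂ m a ≤ i)
    (lm₂ : ℕ → Fin p₂ → ℕ)
    (hlm₂ : ∀ m a, (∃ i ≤ m, aa₂ i = a) →
      lm₂ m a ≤ m ∧ aa₂ (lm₂ m a) = a ∧ ∀ i ≤ m, aa₂ i = a → i ≤ lm₂ m a)
    (S S' : ℕ → ℕ → ℝ)
    (hS_tri : ∀ i j, i < j → S i j = 0) (hS_diag : ∀ i, S i i = 1)
    (hS'_tri : ∀ i j, i < j → S' i j = 0) (hS'_diag : ∀ i, S' i i = 1)
    (hinv₁ : ∀ l m, ∑ k ∈ Finset.range (max l m + 1), S l k * S' k m =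
      if l = m then 1 else 0)
    (hinv₂ : ∀ l m, ∑ k ∈ Finset.range (max l m + 1), S' l k * S k m =
      if l = m then 1 else 0)
    (Sbar Sbar' : ℕ → ℕ → ℝ)
    (hSbar_tri : ∀ i j, j < i → Sbar i j = 0)
    (hSbar'_tri : ∀ i j, j < i → Sbar' i j = 0)
    (hinv₃ : ∀ l m, ∑ k ∈ Finset.range (max l m + 1), Sbar l k * Sbar' k m =
      if l = m then 1 else 0)
    (hinv₄ : ∀ l m, ∑ k ∈ Finset.range (max l m + 1), Sbar' l k * Sbar k m =
      if l = m then 1 else 0)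
    (hSg : ∀ l j, ∑ i ∈ Finset.range (l + 1), S l i * g i j = Sbar l j)
    (Q : ℕ → ℝ → ℝ)
    (hQ : ∀ i y, Q i y = ∑ m ∈ Finset.range (i + 1), S i m * ξ₁ m y)
    (Qbar : ℕ → ℝ → ℝ)
    (hQbar : ∀ j x, Qbar j x = ∑ m ∈ Finset.range (j + 1), Sbar' m j * ξ₂ m x)
    (K : ℕ → ℝ → ℝ → ℝ)
    (hK : ∀ l x y, K l x y = ∑ k ∈ Finset.range l, Q k y * Qbar k x)
    (J : ℕ → ℕ → ℝ)
    (hJ : ∀ l m, J l m = ∑ i ∈ Finset.range (l + 1), S l i * S' (lp₁ (i + 1) (aa₁ i)) m)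
    (l : ℕ) (hl : max (∑ a, n₁ a) (∑ b, n₂ b) ≤ l) (x y : ℝ) :
    (y - x) * K l x y =
      (∑ ij ∈ Finset.Icc l (lp₁ l (aa₁ l - 1)) ×ˢ
          Finset.Icc (lm₁ (l - 1) (aa₁ (l - 1) + 1)) (l - 1),
        Qbar ij.2 x * J ij.2 ij.1 * Q ij.1 y) -
      (∑ ij ∈ Finset.Icc (lm₂ (l - 1) (aa₂ (l - 1) + 1)) (l - 1) ×ˢ
          Finset.Icc l (lp₂ l (aa₂ l - 1)),
        Qbar ij.2 x * J ij.2 ij.1 * Q ij.1 y) :=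
  stmt_17_general μ p₁ p₂ n₁ hn₁ n₂ hn₂ w₁ w₂ kk₁ aa₁ rr₁ hdec₁ kk₂ aa₂ rr₂ hdec₂ ξ₁ hξ₁ ξ₂ hξ₂ g hg
    lp₁ hlp₁ lm₁ hlm₁ lp₂ hlp₂ lm₂ hlm₂ S S' hS_tri hS'_tri hinv₂ Sbar Sbar' hSbar_tri hSbar'_tri
    hinv₃ hinv₄ hSg Q hQ Qbar hQbar K hK J hJ l hl x y
end

section
/- Let n₁ be a composition of length p₁, and for an integer m let m_{{+,a}} (resp. m_{{−,a}}) denote the smallest integer ≥ m (resp. largest integer ≤ m) of type a with respect to n₁, and σ₁(i) = (i+1)_{{+,a₁(i)}}. Let S, S' be mutually inverse lower unitriangular semi-infinite real matrices and define J_{l,m} = Σ_{i≤l} S_{l,i} S'_{σ₁(i),m}. Then for every l ≥ |n₁|: J_{l,l} = S_{l,(l−1)_{{−,a₁(l)}}} + S'_{(l+1)_{{+,a₁(l)}},l} + Σ_{a=1, a≠a₁(l)}^{p₁} S_{l,(l−1)_{{−,a}}} · S'_{(l+1)_{{+,a}},l}. -/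
/-!
Since `S'` is lower triangular, the term `S_{l,i} S'_{σ₁(i),l}` of `J_{l,l}` vanishes unless
`σ₁(i) ≥ l`. For `i = l` this is the term `S'_{(l+1)_{+,a₁(l)},l}`. For `i < l` it forces `i` to be
the last index below `l` of its type, i.e. `i = (l-1)_{-,a}` with `a = a₁(i)`; every type occurs
below `l` because `l ≥ |n₁|`. Then `σ₁(i) = l` when `a = a₁(l)` (where `S'_{l,l} = 1`), and
`σ₁(i) = (l+1)_{+,a}` otherwise.
-/

open Finset

section PartialSums

variable {ι M : Type*} [Fintype ι] [LinearOrder ι]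
  [AddCommMonoid M] [PartialOrder M] [CanonicallyOrderedAdd M]

theorem sum_filter_lt_add_le_sum (f : ι → M) (a : ι) :
    ∑ i ∈ univ.filter (· < a), f i + f a ≤ ∑ i, f i := by
  rw [add_comm, ← sum_insert (by simp)]
  exact sum_le_sum_of_subset (subset_univ _)

theorem sum_filter_lt_add_le_sum_filter_lt (f : ι → M) {a b : ι} (hab : a < b) :
    ∑ i ∈ univ.filter (· < a), f i + f a ≤ ∑ i ∈ univ.filter (· < b), f i := by
  rw [add_comm, ← sum_insert (by simp)]
  refine sum_le_sum_of_subset fun x hx => ?_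
  simp only [mem_insert, mem_filter, mem_univ, true_and] at hx ⊢
  rcases hx with rfl | hx
  · exact hab
  · exact hx.trans hab

end PartialSums

section Composition

variable {ι : Type*} [Fintype ι] [LinearOrder ι] {n : ι → ℕ} {τ : ℕ → ι} {k r : ℕ → ℕ}

theorem type_sum_filter_lt (hn : ∀ a, 1 ≤ n a)
    (hdec : ∀ l, r l < n (τ l) ∧
      l = k l * (∑ b, n b) + (∑ i ∈ univ.filter (· < τ l), n i) + r l) (a : ι) :
    τ (∑ i ∈ univ.filter (· < a), n i) = a := by
  obtain ⟨hr, hdecomp⟩ := hdec (∑ i ∈ univ.filter (· < a), n i)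
  set b := τ (∑ i ∈ univ.filter (· < a), n i)
  have hblock_end := sum_filter_lt_add_le_sum n a
  -- the block start lies below `∑ b, n b`, so it lies in the first period
  have hk : k (∑ i ∈ univ.filter (· < a), n i) = 0 := by
    by_contra hk
    have := Nat.le_mul_of_pos_left (∑ b, n b) (Nat.pos_of_ne_zero hk)
    have := hn a
    omega
  rw [hk, zero_mul, zero_add] at hdecomp
  rcases lt_trichotomy b a with hba | hba | hab
  · have := sum_filter_lt_add_le_sum_filter_lt n hba
    omega
  · exact hba
  · have := sum_filter_lt_add_le_sum_filter_lt n hab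
    have := hn a
    omega

theorem exists_le_type_eq_of_sum_le (hn : ∀ a, 1 ≤ n a)
    (hdec : ∀ l, r l < n (τ l) ∧
      l = k l * (∑ b, n b) + (∑ i ∈ univ.filter (· < τ l), n i) + r l)
    {m : ℕ} (hm : ∑ a, n a ≤ m + 1) (a : ι) : ∃ i ≤ m, τ i = a := by
  refine ⟨_, ?_, type_sum_filter_lt hn hdec a⟩
  have := sum_filter_lt_add_le_sum n a
  have := hn a
  omega

end Composition

section Occurrences

variable {α : Type*} {τ : ℕ → α} {lp lm : ℕ → α → ℕ}
  (hlp : ∀ m a, m ≤ lp m a ∧ τ (lp m a) = a ∧ ∀ i, m ≤ i → τ i = a → lp m a ≤ i)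
  (hlm : ∀ m a, (∃ i ≤ m, τ i = a) →
    lm m a ≤ m ∧ τ (lm m a) = a ∧ ∀ i ≤ m, τ i = a → i ≤ lm m a)
include hlp

theorem lp_eq_of_forall_ne {m j : ℕ} {a : α} (hmj : m ≤ j) (hj : τ j = a)
    (hgap : ∀ i, m ≤ i → i < j → τ i ≠ a) : lp m a = j := by
  obtain ⟨hm, ha, hmin⟩ := hlp m a
  have := hmin j hmj hj
  by_contra hne
  exact hgap _ hm (by omega) ha

include hlm

theorem lp_lm_add_one_of_type_eq {m : ℕ} (hex : ∃ i ≤ m, τ i = τ (m + 1)) :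
    lp (lm m (τ (m + 1)) + 1) (τ (m + 1)) = m + 1 := by
  obtain ⟨hle, -, hmax⟩ := hlm m _ hex
  refine lp_eq_of_forall_ne hlp (by omega) rfl fun i hi him hτ => ?_
  have := hmax i (by omega) hτ
  omega

theorem lp_lm_add_one_of_type_ne {m : ℕ} {a : α} (hex : ∃ i ≤ m, τ i = a)
    (ha : τ (m + 1) ≠ a) : lp (lm m a + 1) a = lp (m + 2) a := by
  obtain ⟨hle, -, hmax⟩ := hlm m a hex
  obtain ⟨hge, htype, hmin⟩ := hlp (m + 2) a
  refine lp_eq_of_forall_ne hlp (by omega) htype fun i hi hij hτ => ?_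
  rcases lt_trichotomy i (m + 1) with h | rfl | h
  · have := hmax i (by omega) hτ
    omega
  · exact ha hτ
  · have := hmin i (by omega) hτ
    omega

theorem lp_add_one_le_of_ne_lm {m i : ℕ} (hi : i ≤ m) (hne : i ≠ lm m (τ i)) :
    lp (i + 1) (τ i) ≤ m := by
  obtain ⟨hle, htype, hmax⟩ := hlm m (τ i) ⟨i, hi, rfl⟩
  have := (hlp (i + 1) (τ i)).2.2 _ (by have := hmax i hi rfl; omega) htype
  omega

end Occurrences

theorem sum_range_eq_sum_lm {α M : Type*} [Fintype α] [AddCommMonoid M] {τ : ℕ → α}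
    {lm : ℕ → α → ℕ} {m : ℕ}
    (hlm : ∀ a, (∃ i ≤ m, τ i = a) →
      lm m a ≤ m ∧ τ (lm m a) = a ∧ ∀ i ≤ m, τ i = a → i ≤ lm m a)
    (hex : ∀ a, ∃ i ≤ m, τ i = a) (f : ℕ → M)
    (hf : ∀ i ≤ m, i ≠ lm m (τ i) → f i = 0) :
    ∑ i ∈ range (m + 1), f i = ∑ a, f (lm m a) := by
  classical
  have himage : univ.image (lm m) ⊆ range (m + 1) := by
    intro x hx
    obtain ⟨a, -, rfl⟩ := mem_image.mp hx
    exact mem_range.mpr (Nat.lt_succ_of_le (hlm a (hex a)).1)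
  rw [← sum_subset himage, sum_image]
  · intro a _ b _ hab
    rw [← (hlm a (hex a)).2.1, hab, (hlm b (hex b)).2.1]
  · intro i hi hni
    refine hf i (Nat.le_of_lt_succ (mem_range.mp hi)) fun h => hni ?_
    exact mem_image.mpr ⟨τ i, mem_univ _, h.symm⟩

theorem stmt_19_general (p₁ : ℕ)
    (n₁ : Fin p₁ → ℕ) (hn₁ : ∀ a, 1 ≤ n₁ a)
    (kk₁ : ℕ → ℕ) (aa₁ : ℕ → Fin p₁) (rr₁ : ℕ → ℕ)
    (hdec₁ : ∀ l, rr₁ l < n₁ (aa₁ l) ∧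
      l = kk₁ l * (∑ b, n₁ b) +
          (∑ i ∈ Finset.univ.filter (fun i => i < aa₁ l), n₁ i) + rr₁ l)
    (lp₁ : ℕ → Fin p₁ → ℕ)
    (hlp₁ : ∀ m a, m ≤ lp₁ m a ∧ aa₁ (lp₁ m a) = a ∧
      ∀ i, m ≤ i → aa₁ i = a → lp₁ m a ≤ i)
    (lm₁ : ℕ → Fin p₁ → ℕ)
    (hlm₁ : ∀ m a, (∃ i ≤ m, aa₁ i = a) →
      lm₁ m a ≤ m ∧ aa₁ (lm₁ m a) = a ∧ ∀ i ≤ m, aa₁ i = a → i ≤ lm₁ m a)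
    (S S' : ℕ → ℕ → ℝ)
    (hS_diag : ∀ i, S i i = 1)
    (hS'_tri : ∀ i j, i < j → S' i j = 0) (hS'_diag : ∀ i, S' i i = 1)
    (J : ℕ → ℕ → ℝ)
    (hJ : ∀ l m, J l m = ∑ i ∈ Finset.range (l + 1), S l i * S' (lp₁ (i + 1) (aa₁ i)) m)
    (l : ℕ) (hl : ∑ a, n₁ a ≤ l) :
    J l l = S l (lm₁ (l - 1) (aa₁ l)) + S' (lp₁ (l + 1) (aa₁ l)) l +
      ∑ a ∈ Finset.univ.erase (aa₁ l),
        S l (lm₁ (l - 1) a) * S' (lp₁ (l + 1) a) l := by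
  obtain ⟨m, rfl⟩ : ∃ m, l = m + 1 :=
    Nat.exists_eq_add_one.mpr <| le_trans (hn₁ (aa₁ l))
      ((single_le_sum (fun _ _ => Nat.zero_le _) (mem_univ _)).trans hl)
  have hex := exists_le_type_eq_of_sum_le hn₁ hdec₁ hl
  have hlast : ∀ a, aa₁ (lm₁ m a) = a := fun a => (hlm₁ m a (hex a)).2.1
  rw [hJ, sum_range_succ, sum_range_eq_sum_lm (hlm₁ m) hex _ fun i hi hne =>
      by rw [hS'_tri _ _ (Nat.lt_succ_of_le (lp_add_one_le_of_ne_lm hlp₁ hlm₁ hi hne)), mul_zero],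
    ← add_sum_erase _ _ (mem_univ (aa₁ (m + 1))), hlast,
    lp_lm_add_one_of_type_eq hlp₁ hlm₁ (hex _), hS'_diag, hS_diag, Nat.add_sub_cancel]
  rw [sum_congr rfl fun a ha => by
    rw [hlast, lp_lm_add_one_of_type_ne hlp₁ hlm₁ (hex a) (ne_of_mem_erase ha).symm]]
  ring

/-- Diagonal entries of the Jacobi-type matrix `J = SΥ₁S⁻¹` in terms of the
entries of the Gauss--Borel factor `S` and its inverse `S'`: for `l ≥ |n₁|`,
`J_{l,l} = S_{l,(l−1)_{−,a₁(l)}} + S'_{(l+1)_{+,a₁(l)},l}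
         + Σ_{a ≠ a₁(l)} S_{l,(l−1)_{−,a}} · S'_{(l+1)_{+,a},l}`. -/
theorem stmt_19 (p₁ : ℕ) (hp₁ : 1 ≤ p₁)
    (n₁ : Fin p₁ → ℕ) (hn₁ : ∀ a, 1 ≤ n₁ a)
    (kk₁ : ℕ → ℕ) (aa₁ : ℕ → Fin p₁) (rr₁ : ℕ → ℕ)
    (hdec₁ : ∀ l, rr₁ l < n₁ (aa₁ l) ∧
      l = kk₁ l * (∑ b, n₁ b) +
          (∑ i ∈ Finset.univ.filter (fun i => i < aa₁ l), n₁ i) + rr₁ l)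
    (lp₁ : ℕ → Fin p₁ → ℕ)
    (hlp₁ : ∀ m a, m ≤ lp₁ m a ∧ aa₁ (lp₁ m a) = a ∧
      ∀ i, m ≤ i → aa₁ i = a → lp₁ m a ≤ i)
    (lm₁ : ℕ → Fin p₁ → ℕ)
    (hlm₁ : ∀ m a, (∃ i ≤ m, aa₁ i = a) →
      lm₁ m a ≤ m ∧ aa₁ (lm₁ m a) = a ∧ ∀ i ≤ m, aa₁ i = a → i ≤ lm₁ m a)
    (S S' : ℕ → ℕ → ℝ)
    (hS_tri : ∀ i j, i < j → S i j = 0) (hS_diag : ∀ i, S i i = 1)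
    (hS'_tri : ∀ i j, i < j → S' i j = 0) (hS'_diag : ∀ i, S' i i = 1)
    (hinv₁ : ∀ l m, ∑ k ∈ Finset.range (max l m + 1), S l k * S' k m =
      if l = m then 1 else 0)
    (hinv₂ : ∀ l m, ∑ k ∈ Finset.range (max l m + 1), S' l k * S k m =
      if l = m then 1 else 0)
    (J : ℕ → ℕ → ℝ)
    (hJ : ∀ l m, J l m = ∑ i ∈ Finset.range (l + 1), S l i * S' (lp₁ (i + 1) (aa₁ i)) m)
    (l : ℕ) (hl : ∑ a, n₁ a ≤ l) :
    J l l = S l (lm₁ (l - 1) (aa₁ l)) + S' (lp₁ (l + 1) (aa₁ l)) l +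
      ∑ a ∈ Finset.univ.erase (aa₁ l),
        S l (lm₁ (l - 1) a) * S' (lp₁ (l + 1) a) l :=
  stmt_19_general p₁ n₁ hn₁ kk₁ aa₁ rr₁ hdec₁ lp₁ hlp₁ lm₁ hlm₁ S S' hS_diag hS'_tri hS'_diag J hJ l
    hl
end
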